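/- arXiv:1908.03890 — 8 statements merged into one kernel-verified Lean document; each statement's English description precedes it below -/
import Mathlib

section
/- Every linear recurrence sequence over ℚ all of whose eigenvalues are roots of rational numbers belongs to PolyRat. -/
/-- The smallest class of sequences `ℕ → ℚ` containing all arithmetic and all geometric
sequences and closed under sum, Hadamard product, shift, and `k`-ary shuffle for `k ≥ 1`. -/
inductive PolyRat : (ℕ → ℚ) → Prop where
  | arith (a b : ℚ) (u : ℕ → ℚ) (h0 : u 0 = a) (hs : ∀ n, u (n + 1) = u n + b) : PolyRat u
  | geo (a l : ℚ) (u : ℕ → ℚ) (h0 : u 0 = a) (hs : ∀ n, u (n + 1) = l * u n) : PolyRat u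
  | sum (u v : ℕ → ℚ) (hu : PolyRat u) (hv : PolyRat v) : PolyRat (fun n => u n + v n)
  | had (u v : ℕ → ℚ) (hu : PolyRat u) (hv : PolyRat v) : PolyRat (fun n => u n * v n)
  | shift (a : ℚ) (u w : ℕ → ℚ) (hu : PolyRat u) (h0 : w 0 = a)
      (hs : ∀ n, w (n + 1) = u n) : PolyRat w
  | shuffle (k : ℕ) (hk : 1 ≤ k) (us : Fin k → ℕ → ℚ) (w : ℕ → ℚ)
      (hw : ∀ (n : ℕ) (i : Fin k), w (k * n + (i : ℕ)) = us i n)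
      (hus : ∀ i, PolyRat (us i)) : PolyRat w

/-- `u` satisfies the linear recurrence with coefficients `a 0 = a_1, …, a (k-1) = a_k`:
`u (n+k) = a_1 · u (n+k-1) + … + a_k · u n`. -/
def SatisfiesLinRec {k : ℕ} (a : Fin k → ℚ) (u : ℕ → ℚ) : Prop :=
  ∀ n : ℕ, u (n + k) = ∑ i : Fin k, a i * u (n + (k - 1 - (i : ℕ)))

/-- A linear recurrence sequence over ℚ. -/
def IsLRS (u : ℕ → ℚ) : Prop :=
  ∃ (k : ℕ), 1 ≤ k ∧ ∃ a : Fin k → ℚ, SatisfiesLinRec a u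

/-- The characteristic polynomial `x^k - a_1·x^(k-1) - … - a_k` of a linear recurrence. -/
noncomputable def charPoly {k : ℕ} (a : Fin k → ℚ) : Polynomial ℚ :=
  Polynomial.X ^ k - ∑ i : Fin k, Polynomial.C (a i) * Polynomial.X ^ (k - 1 - (i : ℕ))

/-- A complex number is a root of a rational number if some positive power of it is rational. -/
def IsRootOfRational (z : ℂ) : Prop := ∃ m : ℕ, 1 ≤ m ∧ ∃ q : ℚ, z ^ m = (q : ℂ)

/-!
Let `p` be the characteristic polynomial and choose `m ≥ 1` with `z ^ m = r_z ∈ ℚ` for every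
root `z` of `p`. Since `X - z` divides `X ^ m - z ^ m`, `p` divides `q (X ^ m)` with
`q = ∏ (X - r_z) ∈ ℚ[X]`, so every subsequence `n ↦ u (m n + j)` is annihilated by `q` applied to
the shift. Peeling off one rational linear factor of `q` at a time, such a sequence agrees, up to
finitely many terms, with a linear combination of the sequences `C(n, i) μ ^ n`, `μ ∈ ℚ`; these
are in PolyRat, and finitely many terms can be corrected with shifts of `0 ^ n`. Finally `u` is
the `m`-ary shuffle of its subsequences.
-/

open Polynomial Filter

section SeqShift

variable (R : Type*) [CommSemiring R]

def seqShift : Module.End R (ℕ → R) := LinearMap.funLeft R R Nat.succ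

variable {R}

theorem seqShift_pow_apply (j : ℕ) (v : ℕ → R) (n : ℕ) : (seqShift R ^ j) v n = v (n + j) := by
  induction j generalizing v n with
  | zero => rfl
  | succ j ih => rw [pow_succ, Module.End.mul_apply, ih]; rfl

theorem aeval_seqShift_C_mul_X_pow_apply (c : R) (j : ℕ) (v : ℕ → R) (n : ℕ) :
    aeval (seqShift R) (C c * X ^ j) v n = c * v (n + j) := by
  simp [seqShift_pow_apply, Module.algebraMap_end_apply]

theorem LinearMap.comp_aeval_eq_aeval_comp {M N : Type*} [AddCommMonoid M] [Module R M]
    [AddCommMonoid N] [Module R N] (T : M →ₗ[R] N) {f : Module.End R M} {g : Module.End R N}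
    (h : T ∘ₗ f = g ∘ₗ T) (p : R[X]) : T ∘ₗ aeval f p = aeval g p ∘ₗ T := by
  induction p using Polynomial.induction_on with
  | C c => ext x; simp [Module.algebraMap_end_apply]
  | add p q hp hq => simp only [map_add, LinearMap.comp_add, LinearMap.add_comp, hp, hq]
  | monomial n c ih =>
    calc T ∘ₗ aeval f (C c * X ^ (n + 1)) = (T ∘ₗ aeval f (C c * X ^ n)) ∘ₗ f := by
          rw [pow_succ, ← mul_assoc, map_mul _ _ X, aeval_X, Module.End.mul_eq_comp]; rfl
      _ = aeval g (C c * X ^ n) ∘ₗ T ∘ₗ f := by rw [ih]; rfl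
      _ = aeval g (C c * X ^ (n + 1)) ∘ₗ T := by
          rw [h, pow_succ, ← mul_assoc, map_mul _ _ X, aeval_X, Module.End.mul_eq_comp]; rfl

theorem aeval_seqShift_expand_apply (p : R[X]) (m j : ℕ) (v : ℕ → R) (n : ℕ) :
    aeval (seqShift R) (expand R m p) v (m * n + j) =
      aeval (seqShift R) p (fun n => v (m * n + j)) n := by
  let decimate : (ℕ → R) →ₗ[R] ℕ → R := LinearMap.funLeft R R fun n => m * n + j
  have hcomm : decimate ∘ₗ seqShift R ^ m = seqShift R ∘ₗ decimate := by
    ext v n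
    simp only [decimate, LinearMap.comp_apply, LinearMap.funLeft_apply, seqShift_pow_apply]
    exact congrArg v (by rw [Nat.succ_eq_add_one]; ring)
  rw [expand_aeval]
  exact congrFun (LinearMap.congr_fun (LinearMap.comp_aeval_eq_aeval_comp decimate hcomm p) v) n

end SeqShift

theorem aeval_seqShift_X_sub_C_apply {R : Type*} [CommRing R] (c : R) (v : ℕ → R) (n : ℕ) :
    aeval (seqShift R) (X - C c) v n = v (n + 1) - c * v n := by
  simp [Module.algebraMap_end_apply]; rfl

section ExpPoly

variable {K : Type*} [Field K]

-- The binomial basis `C(n, j) μ ^ n` (rather than `n ^ j μ ^ n`) makes `X - C μ` act on it by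
-- lowering `j`, by Pascal's rule.
def expPoly (j : ℕ) (μ : K) : ℕ → K := fun n => (n.choose j : K) * μ ^ n

theorem expPoly_zero_apply_succ (μ : K) (n : ℕ) : expPoly 0 μ (n + 1) = μ * expPoly 0 μ n := by
  simp [expPoly, pow_succ, mul_comm]

theorem expPoly_succ_apply_succ (j : ℕ) (μ : K) (n : ℕ) :
    expPoly (j + 1) μ (n + 1) = μ * (expPoly (j + 1) μ n + expPoly j μ n) := by
  simp only [expPoly, Nat.choose_succ_succ', Nat.cast_add, pow_succ]
  ring

theorem expPoly_zero_right_eventuallyEq_zero (j : ℕ) : expPoly j (0 : K) =ᶠ[atTop] 0 :=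
  eventually_atTop.2 ⟨1, fun n hn => by simp [expPoly, zero_pow (by omega : n ≠ 0)]⟩

variable (K) in
def expPolys : Submodule K (ℕ → K) :=
  Submodule.span K (Set.range fun jμ : ℕ × K => expPoly jμ.1 jμ.2)

theorem expPoly_mem_expPolys (j : ℕ) (μ : K) : expPoly j μ ∈ expPolys K :=
  Submodule.subset_span ⟨(j, μ), rfl⟩

def IsEventuallyExpPoly (v : ℕ → K) : Prop := ∃ e ∈ expPolys K, v =ᶠ[atTop] e

theorem exists_aeval_X_sub_C_eventuallyEq_expPoly (c μ : K) (j : ℕ) :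
    ∃ e ∈ expPolys K, aeval (seqShift K) (X - C c) e =ᶠ[atTop] expPoly j μ := by
  by_cases hμc : μ = c
  · subst hμc
    by_cases hμ : μ = 0
    · subst hμ
      exact ⟨0, zero_mem _, by simpa using (expPoly_zero_right_eventuallyEq_zero j).symm⟩
    refine ⟨μ⁻¹ • expPoly (j + 1) μ, Submodule.smul_mem _ _ (expPoly_mem_expPolys _ _),
      Eventually.of_forall fun n => ?_⟩
    rw [map_smul, Pi.smul_apply, aeval_seqShift_X_sub_C_apply, expPoly_succ_apply_succ,
      smul_eq_mul]
    field_simp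
    ring
  · have hμc' : μ - c ≠ 0 := sub_ne_zero.2 hμc
    induction j with
    | zero =>
      refine ⟨(μ - c)⁻¹ • expPoly 0 μ, Submodule.smul_mem _ _ (expPoly_mem_expPolys _ _),
        Eventually.of_forall fun n => ?_⟩
      rw [map_smul, Pi.smul_apply, aeval_seqShift_X_sub_C_apply, expPoly_zero_apply_succ,
        smul_eq_mul]
      field_simp
    | succ j ih =>
      obtain ⟨e, he, hee⟩ := ih
      refine ⟨(μ - c)⁻¹ • (expPoly (j + 1) μ - μ • e), Submodule.smul_mem _ _
        (sub_mem (expPoly_mem_expPolys _ _) (Submodule.smul_mem _ _ he)), ?_⟩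
      filter_upwards [hee] with n hn
      rw [aeval_seqShift_X_sub_C_apply] at hn
      rw [map_smul, Pi.smul_apply, aeval_seqShift_X_sub_C_apply, smul_eq_mul]
      simp only [Pi.sub_apply, Pi.smul_apply, smul_eq_mul, expPoly_succ_apply_succ, ← hn]
      field_simp
      ring

theorem exists_aeval_X_sub_C_eventuallyEq (c : K) {e : ℕ → K} (he : e ∈ expPolys K) :
    ∃ e' ∈ expPolys K, aeval (seqShift K) (X - C c) e' =ᶠ[atTop] e := by
  induction he using Submodule.span_induction with
  | mem f hf =>
    obtain ⟨⟨j, μ⟩, rfl⟩ := hf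
    exact exists_aeval_X_sub_C_eventuallyEq_expPoly c μ j
  | zero => exact ⟨0, zero_mem _, by rw [map_zero]⟩
  | add f g _ _ hf hg =>
    obtain ⟨f', hf', hff⟩ := hf
    obtain ⟨g', hg', hgg⟩ := hg
    exact ⟨f' + g', add_mem hf' hg', by rw [map_add]; exact hff.add hgg⟩
  | smul a f _ hf =>
    obtain ⟨f', hf', hff⟩ := hf
    exact ⟨a • f', Submodule.smul_mem _ _ hf', by rw [map_smul]; exact hff.const_smul a⟩

theorem exists_eventuallyEq_smul_expPoly_zero_of_aeval_X_sub_C {c : K} {d : ℕ → K}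
    (hd : aeval (seqShift K) (X - C c) d =ᶠ[atTop] 0) :
    ∃ a : K, d =ᶠ[atTop] a • expPoly 0 c := by
  obtain ⟨N, hN⟩ := eventually_atTop.1 hd
  have hrec : ∀ n ≥ N, d (n + 1) = c * d n := fun n hn => by
    have := hN n hn
    rwa [aeval_seqShift_X_sub_C_apply, Pi.zero_apply, sub_eq_zero] at this
  by_cases hc : c = 0
  · refine ⟨0, eventually_atTop.2 ⟨N + 1, fun n hn => ?_⟩⟩
    obtain ⟨n, rfl⟩ : ∃ m, n = m + 1 := ⟨n - 1, by omega⟩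
    simpa [hc] using hrec n (by omega)
  · refine ⟨d N / c ^ N, eventually_atTop.2 ⟨N, fun n hn => ?_⟩⟩
    induction n, hn using Nat.le_induction with
    | base => simp [expPoly, hc]
    | succ n hn ih =>
      rw [hrec n hn, ih]
      simp only [Pi.smul_apply, smul_eq_mul, expPoly_zero_apply_succ]
      ring

theorem IsEventuallyExpPoly.of_aeval_X_sub_C (c : K) {v : ℕ → K}
    (h : IsEventuallyExpPoly (aeval (seqShift K) (X - C c) v)) : IsEventuallyExpPoly v := by
  obtain ⟨e, he, hve⟩ := h
  obtain ⟨e', he', he'e⟩ := exists_aeval_X_sub_C_eventuallyEq c he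
  obtain ⟨a, hd⟩ := exists_eventuallyEq_smul_expPoly_zero_of_aeval_X_sub_C (d := v - e')
    (by rw [map_sub]; simpa using hve.sub he'e)
  refine ⟨e' + a • expPoly 0 c,
    add_mem he' (Submodule.smul_mem _ _ (expPoly_mem_expPolys _ _)), ?_⟩
  filter_upwards [hd] with n hn
  simp only [Pi.sub_apply, Pi.add_apply] at hn ⊢
  rw [← hn]
  ring

theorem isEventuallyExpPoly_of_aeval_prod_X_sub_C (s : Multiset K) {v : ℕ → K}
    (h : aeval (seqShift K) (s.map fun c => X - C c).prod v = 0) : IsEventuallyExpPoly v := by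
  induction s using Multiset.induction_on generalizing v with
  | empty =>
    rw [Multiset.map_zero, Multiset.prod_zero, map_one, Module.End.one_apply] at h
    exact ⟨0, zero_mem _, by rw [h]⟩
  | cons c s ih =>
    rw [Multiset.map_cons, Multiset.prod_cons, mul_comm, map_mul, Module.End.mul_apply] at h
    exact (ih h).of_aeval_X_sub_C c

end ExpPoly

namespace PolyRat

theorem const (c : ℚ) : PolyRat fun _ => c :=
  geo c 1 _ rfl fun _ => (one_mul c).symm

theorem smul (c : ℚ) {u : ℕ → ℚ} (hu : PolyRat u) : PolyRat (c • u) :=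
  had _ _ (const c) hu

theorem of_mem_span {s : Set (ℕ → ℚ)} (hs : ∀ u ∈ s, PolyRat u) {u : ℕ → ℚ}
    (hu : u ∈ Submodule.span ℚ s) : PolyRat u := by
  induction hu using Submodule.span_induction with
  | mem u hu => exact hs u hu
  | zero => exact const 0
  | add u v _ _ hu hv => exact sum u v hu hv
  | smul c u _ hu => exact hu.smul c

theorem eval_natCast (P : ℚ[X]) : PolyRat fun n => P.eval (n : ℚ) := by
  induction P using Polynomial.induction_on with
  | C c => simpa using const c
  | add P Q hP hQ => simpa using sum _ _ hP hQ
  | monomial k c ih =>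
    have hid : PolyRat fun n => (n : ℚ) := arith 0 1 _ Nat.cast_zero fun n => Nat.cast_succ n
    simpa [pow_succ, mul_assoc] using had _ _ ih hid

theorem expPoly (j : ℕ) (μ : ℚ) : PolyRat (expPoly j μ) := by
  have hchoose : PolyRat fun n => (n.choose j : ℚ) := by
    simpa [Nat.cast_choose_eq_descPochhammer_div, div_eq_mul_inv, mul_comm]
      using eval_natCast (C ((j.factorial : ℚ)⁻¹) * descPochhammer ℚ j)
  exact had _ _ hchoose (geo 1 μ _ (pow_zero μ) fun n => pow_succ' μ n)

theorem single (N : ℕ) : PolyRat (Pi.single N 1) := by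
  induction N with
  | zero => exact geo 1 0 _ rfl fun n => by simp
  | succ N ih => exact shift 0 _ _ ih rfl fun n => by simp [Pi.single_apply]

theorem of_eventuallyEq {u v : ℕ → ℚ} (hu : PolyRat u) (h : v =ᶠ[atTop] u) : PolyRat v := by
  obtain ⟨N, hN⟩ := eventually_atTop.1 h
  clear h
  induction N generalizing v with
  | zero => exact funext (fun n => hN n n.zero_le) ▸ hu
  | succ N ih =>
    have hupd : PolyRat (Function.update v N (u N)) := by
      refine ih fun n hn => ?_
      rcases hn.eq_or_lt with rfl | hn
      · simp
      · rw [Function.update_of_ne hn.ne', hN n hn]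
    have hv : v = Function.update v N (u N) + (v N - u N) • Pi.single N 1 := by
      ext n
      by_cases hn : n = N
      · subst hn; simp
      · simp [hn]
    exact hv ▸ sum _ _ hupd ((single N).smul _)

theorem of_isEventuallyExpPoly {v : ℕ → ℚ} (h : IsEventuallyExpPoly v) : PolyRat v := by
  obtain ⟨e, he, hve⟩ := h
  exact (of_mem_span (by rintro _ ⟨⟨j, μ⟩, rfl⟩; exact expPoly j μ) he).of_eventuallyEq hve

end PolyRat

theorem Finset.exists_pow_mem_of_forall {M : Type*} [Monoid M] (S : Submonoid M) (s : Finset M)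
    (h : ∀ z ∈ s, ∃ m, 1 ≤ m ∧ z ^ m ∈ S) : ∃ m, 1 ≤ m ∧ ∀ z ∈ s, z ^ m ∈ S := by
  classical
  induction s using Finset.induction_on with
  | empty => exact ⟨1, le_rfl, by simp⟩
  | insert a s _ ih =>
    obtain ⟨ma, hma, ha⟩ := h a (mem_insert_self a s)
    obtain ⟨ms, hms, hs⟩ := ih fun z hz => h z (mem_insert_of_mem hz)
    refine ⟨ma * ms, one_le_mul hma hms, fun z hz => ?_⟩
    rcases mem_insert.1 hz with rfl | hz
    · rw [pow_mul]; exact pow_mem ha ms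
    · rw [mul_comm, pow_mul]; exact pow_mem (hs z hz) ma

-- Witness: the `rᵢ` with `f rᵢ = zᵢ ^ m` for the roots `zᵢ` of `p`, as `X - zᵢ ∣ X ^ m - zᵢ ^ m`.
theorem Polynomial.Monic.exists_dvd_expand_prod_X_sub_C {K L : Type*} [Field K] [Field L]
    [IsAlgClosed L] (f : K →+* L) {p : K[X]} (hp : p.Monic) (m : ℕ)
    (h : ∀ z ∈ (p.map f).roots, ∃ r, f r = z ^ m) :
    ∃ s : Multiset K, p ∣ Polynomial.expand K m (s.map fun r => X - C r).prod := by
  choose! r hr using h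
  refine ⟨(p.map f).roots.map r, ?_⟩
  rw [← map_dvd_map' f]
  calc p.map f = ((p.map f).roots.map fun z => X - C z).prod :=
        (prod_multiset_X_sub_C_of_monic_of_roots_card_eq (hp.map f)
          IsAlgClosed.card_roots_eq_natDegree).symm
    _ ∣ ((p.map f).roots.map fun z => X ^ m - C (f (r z))).prod :=
        Multiset.prod_dvd_prod_of_dvd _ _ fun z hz => by
          simpa [hr z hz, C_pow] using sub_dvd_pow_sub_pow X (C z) m
    _ = _ := by
        simp [Polynomial.map_multiset_prod, map_multiset_prod, Multiset.map_map]

theorem charPoly_monic {k : ℕ} (a : Fin k → ℚ) : (charPoly a).Monic := by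
  refine monic_X_pow_sub (lt_of_le_of_lt (degree_sum_le _ _) ?_)
  refine (Finset.sup_lt_iff (WithBot.bot_lt_coe k)).2 fun i _ => ?_
  exact (degree_C_mul_X_pow_le _ _).trans_lt (Nat.cast_lt.2 (by omega))

theorem aeval_seqShift_charPoly_eq_zero {k : ℕ} {a : Fin k → ℚ} {u : ℕ → ℚ}
    (hrec : SatisfiesLinRec a u) : aeval (seqShift ℚ) (charPoly a) u = 0 := by
  ext n
  simp only [charPoly, map_sub, map_sum, map_pow, aeval_X, LinearMap.sub_apply,
    LinearMap.sum_apply, Pi.sub_apply, Finset.sum_apply, seqShift_pow_apply,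
    aeval_seqShift_C_mul_X_pow_apply, Pi.zero_apply, hrec n, sub_self]

theorem lrs_with_rootOfRational_eigenvalues_mem_polyRat_general (u : ℕ → ℚ) (k : ℕ)
    (a : Fin k → ℚ) (hrec : SatisfiesLinRec a u)
    (heig : ∀ z : ℂ, Polynomial.aeval z (charPoly a) = 0 → IsRootOfRational z) :
    PolyRat u := by
  let roots := ((charPoly a).map (algebraMap ℚ ℂ)).roots
  obtain ⟨m, hm, hroots⟩ := roots.toFinset.exists_pow_mem_of_forall
    (algebraMap ℚ ℂ).rangeS.toSubmonoid fun z hz => by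
      obtain ⟨m, hm, q, hq⟩ := heig z <| by
        rw [Multiset.mem_toFinset, mem_roots_map_of_injective (algebraMap ℚ ℂ).injective
          (charPoly_monic a).ne_zero] at hz
        rwa [aeval_def]
      exact ⟨m, hm, q, by simp [hq]⟩
  obtain ⟨s, hdvd⟩ := (charPoly_monic a).exists_dvd_expand_prod_X_sub_C (algebraMap ℚ ℂ) m
    fun z hz => hroots z (Multiset.mem_toFinset.2 hz)
  have hu : aeval (seqShift ℚ) (expand ℚ m (s.map fun r => X - C r).prod) u = 0 := by
    obtain ⟨g, hg⟩ := hdvd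
    rw [hg, mul_comm, map_mul, Module.End.mul_apply, aeval_seqShift_charPoly_eq_zero hrec,
      map_zero]
  refine PolyRat.shuffle m hm (fun j n => u (m * n + j)) u (fun _ _ => rfl) fun j =>
    PolyRat.of_isEventuallyExpPoly (isEventuallyExpPoly_of_aeval_prod_X_sub_C s ?_)
  ext n
  rw [← aeval_seqShift_expand_apply, hu, Pi.zero_apply, Pi.zero_apply]

/-- Every linear recurrence sequence over ℚ all of whose eigenvalues are
roots of rational numbers belongs to PolyRat. -/
theorem lrs_with_rootOfRational_eigenvalues_mem_polyRat (u : ℕ → ℚ) (k : ℕ) (hk : 1 ≤ k)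
    (a : Fin k → ℚ) (hrec : SatisfiesLinRec a u)
    (heig : ∀ z : ℂ, Polynomial.aeval z (charPoly a) = 0 → IsRootOfRational z) :
    PolyRat u :=
  lrs_with_rootOfRational_eigenvalues_mem_polyRat_general u k a hrec heig
end

section
/- Every sequence in PolyRat is recognized by a polynomially ambiguous weighted automaton over a unary alphabet. -/
/-- The weighted automaton with states `Fin d`, transition matrix `M`, initial vector `I`
and final vector `F` recognizes the sequence `u`, i.e. `u n = Iᵀ · Mⁿ · F`. -/
def Recognizes {d : ℕ} (M : Matrix (Fin d) (Fin d) ℚ) (I F : Fin d → ℚ) (u : ℕ → ℚ) : Prop :=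
  ∀ n : ℕ, u n = dotProduct I ((M ^ n).mulVec F)

/-- `r` is an accepting run of length `n` of the weighted automaton `(Fin d, M, I, F)`. -/
def AcceptingRun {d : ℕ} (M : Matrix (Fin d) (Fin d) ℚ) (I F : Fin d → ℚ) (n : ℕ)
    (r : Fin (n + 1) → Fin d) : Prop :=
  I (r 0) ≠ 0 ∧ F (r (Fin.last n)) ≠ 0 ∧ ∀ i : Fin n, M (r i.castSucc) (r i.succ) ≠ 0

/-- The ambiguity of a weighted automaton: the number of accepting runs of length `n`. -/
noncomputable def ambiguity {d : ℕ} (M : Matrix (Fin d) (Fin d) ℚ) (I F : Fin d → ℚ)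
    (n : ℕ) : ℕ :=
  Nat.card {r : Fin (n + 1) → Fin d // AcceptingRun M I F n r}

/-- A weighted automaton is polynomially ambiguous if its ambiguity is bounded by a
polynomial in the input length. -/
def PolyAmbiguous {d : ℕ} (M : Matrix (Fin d) (Fin d) ℚ) (I F : Fin d → ℚ) : Prop :=
  ∃ P : Polynomial ℕ, ∀ n : ℕ, ambiguity M I F n ≤ P.eval n

/-!
Every PolyRat sequence is recognized by an automaton whose states carry levels in a linear order
such that levels never decrease along transitions and, from each state, at most one transition
stays within the same level. For arithmetic and geometric sequences two states, resp. one, suffice,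
and the usual constructions preserve the property: block matrices with lexicographic levels for sum
and shift, the Kronecker product with lexicographic levels for the Hadamard product, and for a
shuffle a sum of copies layered over a cyclic counter. In such an automaton with `d` states a run
is determined by the time at which it enters each level and the state it enters it in, so there are
at most `d ^ d * (n + 2) ^ d` runs of length `n`.
-/

open Matrix Finset
open scoped Kronecker Fin.NatCast

structure IsLevelDeterministic {R Q α : Type*} [Zero R] [LE α] (M : Matrix Q Q R) (φ : Q → α) :
    Prop where
  mono : ∀ q q', M q q' ≠ 0 → φ q ≤ φ q'
  det : ∀ q q₁ q₂, M q q₁ ≠ 0 → M q q₂ ≠ 0 → φ q₁ = φ q → φ q₂ = φ q → q₁ = q₂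

section Ambiguity

variable {α : Type*} [LinearOrder α]

lemma Monotone.lt_iff_lt_card_filter {m : ℕ} {f : Fin m → α} (hf : Monotone f) (c : α)
    (i : Fin m) : f i < c ↔ (i : ℕ) < #{j | f j < c} := by
  constructor
  · intro h
    calc (i : ℕ) < #(Iic i) := by rw [Fin.card_Iic]; omega
      _ ≤ #{j | f j < c} :=
        card_le_card fun j hj => mem_filter.2 ⟨mem_univ _, (hf (mem_Iic.1 hj)).trans_lt h⟩
  · intro h
    by_contra! hc
    have : #{j | f j < c} ≤ #(Iio i) := card_le_card fun j hj =>
      mem_Iio.2 (hf.reflect_lt ((mem_filter.1 hj).2.trans_le hc))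
    rw [Fin.card_Iio] at this
    omega

lemma Monotone.card_filter_lt_eq {m : ℕ} {f : Fin m → α} (hf : Monotone f) {i : Fin m}
    (h : ∀ j < i, f j < f i) : #{j | f j < f i} = i := by
  rw [← Fin.card_Iio]
  congr 1
  ext j
  simpa using ⟨hf.reflect_lt, h j⟩

variable {d : ℕ} {M : Matrix (Fin d) (Fin d) ℚ} {I F : Fin d → ℚ} {φ : Fin d → α}

lemma AcceptingRun.monotone_level (hM : IsLevelDeterministic M φ) {n : ℕ}
    {r : Fin (n + 1) → Fin d} (hr : AcceptingRun M I F n r) : Monotone fun i => φ (r i) :=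
  Fin.monotone_iff_le_succ.2 fun i => hM.mono _ _ (hr.2.2 i)

/-- For each state `q`: the time at which `r` reaches the level of `q`, and the state of `r` at
that time. -/
def levelEntryCode {n : ℕ} (φ : Fin d → α) (r : Fin (n + 1) → Fin d) :
    (Fin d → Fin (n + 2)) × (Fin d → Fin d) :=
  (fun q => ⟨#{j | φ (r j) < φ q}, Nat.lt_succ_of_le ((card_le_univ _).trans (by simp))⟩,
   fun q => r (Fin.clamp #{j | φ (r j) < φ q} n))

lemma AcceptingRun.eq_of_levelEntryCode_eq (hM : IsLevelDeterministic M φ) {n : ℕ}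
    {r r' : Fin (n + 1) → Fin d} (hr : AcceptingRun M I F n r) (hr' : AcceptingRun M I F n r')
    (h : levelEntryCode φ r = levelEntryCode φ r') : r = r' := by
  have hcount (q) : #{j | φ (r j) < φ q} = #{j | φ (r' j) < φ q} :=
    congrArg Fin.val (congrFun (congrArg Prod.fst h) q)
  have hentry (q) :
      r (Fin.clamp #{j | φ (r j) < φ q} n) = r' (Fin.clamp #{j | φ (r' j) < φ q} n) :=
    congrFun (congrArg Prod.snd h) q
  have hlevel (i) : φ (r i) = φ (r' i) := by
    have key (q) : φ (r i) < φ q ↔ φ (r' i) < φ q := by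
      rw [(hr.monotone_level hM).lt_iff_lt_card_filter,
        (hr'.monotone_level hM).lt_iff_lt_card_filter, hcount]
    exact le_antisymm (not_lt.1 fun h => lt_irrefl _ ((key (r i)).2 h))
      (not_lt.1 fun h => lt_irrefl _ ((key (r' i)).1 h))
  have clamp_eq (i : Fin (n + 1)) : Fin.clamp i n = i := Fin.ext (by simp [Fin.clamp]; omega)
  -- a run is pinned down at every position where it enters a new level
  have of_entry (i) (hi : ∀ j < i, φ (r j) < φ (r i)) : r i = r' i := by
    have hi' : ∀ j < i, φ (r' j) < φ (r' i) := by simpa only [hlevel] using hi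
    have := hentry (r i)
    rwa [(hr.monotone_level hM).card_filter_lt_eq hi, hlevel,
      (hr'.monotone_level hM).card_filter_lt_eq hi', clamp_eq] at this
  funext i
  induction i using Fin.induction with
  | zero => exact of_entry 0 fun j hj => absurd hj (Fin.not_lt_zero j)
  | succ i ih =>
    rcases (hr.monotone_level hM (Fin.castSucc_le_succ i)).lt_or_eq with hlt | heq
    · exact of_entry _ fun j hj =>
        (hr.monotone_level hM (Fin.le_castSucc_iff.2 hj)).trans_lt hlt
    · exact hM.det _ _ _ (hr.2.2 i) (ih ▸ hr'.2.2 i) heq.symm (by rw [← hlevel]; exact heq.symm)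

theorem IsLevelDeterministic.ambiguity_le (hM : IsLevelDeterministic M φ) (n : ℕ) :
    ambiguity M I F n ≤ d ^ d * (n + 2) ^ d := by
  calc ambiguity M I F n ≤ Nat.card ((Fin d → Fin (n + 2)) × (Fin d → Fin d)) :=
        Nat.card_le_card_of_injective (fun r => levelEntryCode φ r.1)
          fun r r' h => Subtype.ext (r.2.eq_of_levelEntryCode_eq hM r'.2 h)
    _ = d ^ d * (n + 2) ^ d := by simp [Nat.card_eq_fintype_card, mul_comm]

theorem IsLevelDeterministic.polyAmbiguous (hM : IsLevelDeterministic M φ) :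
    PolyAmbiguous M I F :=
  ⟨.C (d ^ d) * (.X + 2) ^ d, fun n => by simpa using hM.ambiguity_le n⟩

end Ambiguity

def cyclicLayers {R Q : Type*} [Zero R] {k : ℕ} (W : Fin (k + 1) → Matrix Q Q R) :
    Matrix (Fin (k + 1) × Q) (Fin (k + 1) × Q) R :=
  of fun x y => if y.1 = x.1 + 1 then W x.1 x.2 y.2 else 0

def onLayer {ι Q R : Type*} [DecidableEq ι] [Zero R] (j : ι) (v : Q → R) : ι × Q → R :=
  fun x => if x.1 = j then v x.2 else 0

namespace IsLevelDeterministic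

variable {R Q Q' α β : Type*}

lemma of_injective [Zero R] [LE α] {M : Matrix Q Q R} {φ : Q → α} (hφ : φ.Injective)
    (hmono : ∀ q q', M q q' ≠ 0 → φ q ≤ φ q') : IsLevelDeterministic M φ :=
  ⟨hmono, fun _ _ _ _ _ h₁ h₂ => hφ (h₁.trans h₂.symm)⟩

lemma zero [Zero R] [LE α] (φ : Q → α) : IsLevelDeterministic (0 : Matrix Q Q R) φ :=
  ⟨fun _ _ h => absurd rfl h, fun _ _ _ h => absurd rfl h⟩

lemma one [Zero R] [One R] [DecidableEq Q] [Preorder α] (φ : Q → α) :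
    IsLevelDeterministic (1 : Matrix Q Q R) φ := by
  have eq_of_ne_zero {q q' : Q} (h : (1 : Matrix Q Q R) q q' ≠ 0) : q' = q :=
    (not_imp_comm.1 one_apply_ne h).symm
  exact ⟨fun _ _ h => (congrArg φ (eq_of_ne_zero h)).ge,
    fun _ _ _ h₁ h₂ _ _ => (eq_of_ne_zero h₁).trans (eq_of_ne_zero h₂).symm⟩

lemma submatrix [Zero R] [LE α] {M : Matrix Q Q R} {φ : Q → α} (h : IsLevelDeterministic M φ)
    {f : Q' → Q} (hf : f.Injective) : IsLevelDeterministic (M.submatrix f f) (φ ∘ f) :=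
  ⟨fun _ _ hq => h.mono _ _ hq, fun _ _ _ h₁ h₂ e₁ e₂ => hf (h.det _ _ _ h₁ h₂ e₁ e₂)⟩

lemma fromBlocks [Zero R] [LE α] [LE β] {A : Matrix Q Q R} {D : Matrix Q' Q' R} {φ : Q → α}
    {ψ : Q' → β} (hA : IsLevelDeterministic A φ) (hD : IsLevelDeterministic D ψ)
    (B : Matrix Q Q' R) :
    IsLevelDeterministic (Matrix.fromBlocks A B 0 D) fun x => toLex (Sum.map φ ψ x) := by
  constructor
  · rintro (q | q) (q' | q') h <;> simp only [fromBlocks_apply₁₁, fromBlocks_apply₂₁,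
      fromBlocks_apply₂₂, Matrix.zero_apply, ne_eq, not_true_eq_false] at h
    · exact Sum.Lex.inl_le_inl_iff.2 (hA.mono _ _ h)
    · exact Sum.Lex.inl_le_inr _ _
    · exact Sum.Lex.inr_le_inr_iff.2 (hD.mono _ _ h)
  · rintro (q | q) (q₁ | q₁) (q₂ | q₂) h₁ h₂ e₁ e₂ <;>
      simp only [fromBlocks_apply₁₁, fromBlocks_apply₁₂, fromBlocks_apply₂₁, fromBlocks_apply₂₂,
        Matrix.zero_apply, ne_eq, not_true_eq_false] at h₁ h₂ <;> simp at e₁ e₂ ⊢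
    · exact hA.det _ _ _ h₁ h₂ e₁ e₂
    · exact hD.det _ _ _ h₁ h₂ e₁ e₂

lemma kronecker [MulZeroClass R] [PartialOrder α] [Preorder β] {A : Matrix Q Q R}
    {B : Matrix Q' Q' R} {φ : Q → α} {ψ : Q' → β} (hA : IsLevelDeterministic A φ)
    (hB : IsLevelDeterministic B ψ) :
    IsLevelDeterministic (A ⊗ₖ B) fun x => toLex (φ x.1, ψ x.2) := by
  constructor
  · intro q q' h
    rw [kronecker_apply] at h
    exact Prod.Lex.toLex_mono
      ⟨hA.mono _ _ (left_ne_zero_of_mul h), hB.mono _ _ (right_ne_zero_of_mul h)⟩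
  · intro q q₁ q₂ h₁ h₂ e₁ e₂
    rw [kronecker_apply] at h₁ h₂
    simp only [toLex_inj, Prod.mk.injEq] at e₁ e₂
    exact Prod.ext (hA.det _ _ _ (left_ne_zero_of_mul h₁) (left_ne_zero_of_mul h₂) e₁.1 e₂.1)
      (hB.det _ _ _ (right_ne_zero_of_mul h₁) (right_ne_zero_of_mul h₂) e₁.2 e₂.2)

lemma cyclicLayers [Zero R] [LE α] {k : ℕ} {W : Fin (k + 1) → Matrix Q Q R} {φ : Q → α}
    (hW : ∀ j, IsLevelDeterministic (W j) φ) :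
    IsLevelDeterministic (cyclicLayers W) (φ ∘ Prod.snd) := by
  have of_ne_zero {x y} (h : _root_.cyclicLayers W x y ≠ 0) :
      y.1 = x.1 + 1 ∧ W x.1 x.2 y.2 ≠ 0 := by
    by_contra hc
    simp only [_root_.cyclicLayers, of_apply] at h
    split_ifs at h with hy
    · exact hc ⟨hy, h⟩
    · exact h rfl
  constructor
  · intro x y h
    exact (hW x.1).mono _ _ (of_ne_zero h).2
  · intro x y₁ y₂ h₁ h₂ e₁ e₂
    obtain ⟨l₁, w₁⟩ := of_ne_zero h₁
    obtain ⟨l₂, w₂⟩ := of_ne_zero h₂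
    exact Prod.ext (l₁.trans l₂.symm) ((hW x.1).det _ _ _ w₁ w₂ e₁ e₂)

end IsLevelDeterministic

section VecMul

variable {R Q Q' P P' : Type*}

lemma vecMul_pow_of_vecMul_eq [Semiring R] [Fintype Q] [DecidableEq Q] {M : Matrix Q Q R}
    {x : Q → R} {v : ℕ → Q → R} (h₀ : x = v 0) (h : ∀ n, v n ᵥ* M = v (n + 1)) :
    ∀ n, x ᵥ* M ^ n = v n
  | 0 => by rw [pow_zero, vecMul_one, h₀]
  | n + 1 => by rw [pow_succ, ← vecMul_vecMul, vecMul_pow_of_vecMul_eq h₀ h n, h]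

variable [CommSemiring R] [Fintype Q] [Fintype Q']

lemma vecMul_kronecker (v : Q → R) (w : Q' → R) (A : Matrix Q P R) (B : Matrix Q' P' R) :
    (fun x : Q × Q' => v x.1 * w x.2) ᵥ* (A ⊗ₖ B) = fun y => (v ᵥ* A) y.1 * (w ᵥ* B) y.2 := by
  ext ⟨p, p'⟩
  simp only [vecMul, dotProduct, kronecker_apply, Fintype.sum_prod_type, Fintype.sum_mul_sum]
  exact sum_congr rfl fun _ _ => sum_congr rfl fun _ _ => by ring

lemma dotProduct_mul_mul (v f : Q → R) (w g : Q' → R) :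
    (fun x : Q × Q' => v x.1 * w x.2) ⬝ᵥ (fun x => f x.1 * g x.2) = (v ⬝ᵥ f) * (w ⬝ᵥ g) := by
  simp only [dotProduct, Fintype.sum_prod_type, Fintype.sum_mul_sum]
  exact sum_congr rfl fun _ _ => sum_congr rfl fun _ _ => by ring

variable {k : ℕ}

lemma onLayer_vecMul_cyclicLayers (W : Fin (k + 1) → Matrix Q Q R) (j : Fin (k + 1))
    (v : Q → R) : onLayer j v ᵥ* cyclicLayers W = onLayer (j + 1) (v ᵥ* W j) := by
  ext ⟨j', q'⟩
  simp only [vecMul, dotProduct, cyclicLayers, onLayer, of_apply, Fintype.sum_prod_type]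
  rw [Fintype.sum_eq_single j fun j'' h => by simp [h]]
  simp

lemma onLayer_dotProduct_onLayer (i j : Fin (k + 1)) (v w : Q → R) :
    onLayer i v ⬝ᵥ onLayer j w = if i = j then v ⬝ᵥ w else 0 := by
  by_cases h : i = j
  · simp [dotProduct, onLayer, Fintype.sum_prod_type, h]
  · simp [dotProduct, onLayer, Fintype.sum_prod_type, h, Ne.symm h]

end VecMul

lemma Nat.add_one_div_eq_ite (n k : ℕ) :
    (n + 1) / (k + 1) = n / (k + 1) + if (n : Fin (k + 1)) = Fin.last k then 1 else 0 := by
  rw [Nat.succ_div]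
  congr 1
  refine if_congr ?_ rfl rfl
  rw [← Fin.natCast_eq_zero, Nat.cast_succ, ← Fin.last_add_one, add_left_inj]

def LevelRecognizable (u : ℕ → ℚ) : Prop :=
  ∃ (Q : Type) (_ : Fintype Q) (_ : DecidableEq Q) (α : Type) (_ : LinearOrder α)
    (M : Matrix Q Q ℚ) (I F : Q → ℚ) (φ : Q → α),
    IsLevelDeterministic M φ ∧ ∀ n, u n = (I ᵥ* M ^ n) ⬝ᵥ F

namespace LevelRecognizable

variable {u v : ℕ → ℚ}

lemma of_isLevelDeterministic {Q α : Type} [Fintype Q] [DecidableEq Q] [LinearOrder α]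
    {M : Matrix Q Q ℚ} {φ : Q → α} (hM : IsLevelDeterministic M φ) (I F : Q → ℚ)
    (hu : ∀ n, u n = (I ᵥ* M ^ n) ⬝ᵥ F) : LevelRecognizable u :=
  ⟨Q, _, _, α, _, M, I, F, φ, hM, hu⟩

lemma of_arith {b : ℚ} (hs : ∀ n, u (n + 1) = u n + b) : LevelRecognizable u := by
  have hmono (q q' : Fin 2) (h : !![1, b; 0, 1] q q' ≠ 0) : q ≤ q' := by
    fin_cases q <;> fin_cases q' <;> simp_all
  have hpow : ∀ n, ![1, u 0] ᵥ* !![1, b; 0, 1] ^ n = ![1, u n] :=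
    vecMul_pow_of_vecMul_eq (v := fun n => ![1, u n]) rfl fun n => by
      ext i; fin_cases i <;> simp [vecMul, dotProduct, hs, add_comm]
  exact of_isLevelDeterministic (φ := id) (.of_injective Function.injective_id hmono)
    ![1, u 0] ![0, 1] fun n => by simp [hpow]

lemma of_geom {l : ℚ} (hs : ∀ n, u (n + 1) = l * u n) : LevelRecognizable u := by
  have hpow : ∀ n, (fun _ => u 0) ᵥ* diagonal (fun _ : Unit => l) ^ n = fun _ => u n :=
    vecMul_pow_of_vecMul_eq (v := fun n _ => u n) rfl fun n => by
      ext; simp [vecMul_diagonal, hs, mul_comm]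
  exact of_isLevelDeterministic (M := diagonal fun _ : Unit => l) (φ := id)
    (.of_injective Function.injective_id fun _ _ _ => (Subsingleton.elim _ _).le)
    (fun _ => u 0) (fun _ => 1) fun n => by simp [hpow]

lemma zero : LevelRecognizable 0 :=
  of_geom (l := 0) fun _ => by simp

lemma add (hu : LevelRecognizable u) (hv : LevelRecognizable v) : LevelRecognizable (u + v) := by
  obtain ⟨Q, _, _, α, _, A, I, F, φ, hA, hu⟩ := hu
  obtain ⟨Q', _, _, β, _, D, I', F', ψ, hD, hv⟩ := hv
  have hpow : ∀ n, Sum.elim I I' ᵥ* fromBlocks A 0 0 D ^ n =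
      Sum.elim (I ᵥ* A ^ n) (I' ᵥ* D ^ n) :=
    vecMul_pow_of_vecMul_eq (v := fun n => Sum.elim (I ᵥ* A ^ n) (I' ᵥ* D ^ n)) (by simp)
      fun n => by simp [vecMul_fromBlocks, pow_succ, vecMul_vecMul]
  exact of_isLevelDeterministic (hA.fromBlocks hD 0) (Sum.elim I I') (Sum.elim F F')
    fun n => by simp [hpow, sumElim_dotProduct_sumElim, hu, hv]

lemma mul (hu : LevelRecognizable u) (hv : LevelRecognizable v) : LevelRecognizable (u * v) := by
  obtain ⟨Q, _, _, α, _, A, I, F, φ, hA, hu⟩ := hu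
  obtain ⟨Q', _, _, β, _, B, I', F', ψ, hB, hv⟩ := hv
  have hpow : ∀ n, (fun x => I x.1 * I' x.2) ᵥ* (A ⊗ₖ B) ^ n =
      fun x => (I ᵥ* A ^ n) x.1 * (I' ᵥ* B ^ n) x.2 :=
    vecMul_pow_of_vecMul_eq (v := fun n (x : Q × Q') => (I ᵥ* A ^ n) x.1 * (I' ᵥ* B ^ n) x.2)
      (by simp) fun n => by simp [vecMul_kronecker, pow_succ, vecMul_vecMul]
  exact of_isLevelDeterministic (hA.kronecker hB) (fun x => I x.1 * I' x.2)
    (fun x => F x.1 * F' x.2) fun n => by simp [hpow, dotProduct_mul_mul, hu, hv]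

lemma shift (hu : LevelRecognizable u) {w : ℕ → ℚ} (hs : ∀ n, w (n + 1) = u n) :
    LevelRecognizable w := by
  obtain ⟨Q, _, _, α, _, A, I, F, φ, hA, hu⟩ := hu
  let M : Matrix (Unit ⊕ Q) (Unit ⊕ Q) ℚ := fromBlocks 0 (of fun _ => I) 0 A
  have hstart : Sum.elim (fun _ => 1) 0 ᵥ* M = Sum.elim (0 : Unit → ℚ) I := by
    ext (_ | q) <;> simp [M, vecMul, dotProduct]
  have hpow : ∀ n, Sum.elim (0 : Unit → ℚ) I ᵥ* M ^ n =
      Sum.elim (0 : Unit → ℚ) (I ᵥ* A ^ n) :=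
    vecMul_pow_of_vecMul_eq (v := fun n => Sum.elim (0 : Unit → ℚ) (I ᵥ* A ^ n)) (by simp)
      fun n => by simp [M, vecMul_fromBlocks, pow_succ, vecMul_vecMul]
  refine of_isLevelDeterministic
    ((IsLevelDeterministic.zero (id : Unit → Unit)).fromBlocks hA (of fun _ => I))
    (Sum.elim (fun _ => 1) 0) (Sum.elim (fun _ => w 0) F) fun n => ?_
  cases n with
  | zero => simp
  | succ n => rw [pow_succ', ← vecMul_vecMul, hstart, hpow, hs, hu]; simp

lemma stretch (hu : LevelRecognizable u) (k : ℕ) (i : Fin (k + 1)) :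
    LevelRecognizable fun n : ℕ => if (n : Fin (k + 1)) = i then u (n / (k + 1)) else 0 := by
  obtain ⟨Q, _, _, α, _, A, I, F, φ, hA, hu⟩ := hu
  -- one step of `A` every `k + 1` steps
  let W : Fin (k + 1) → Matrix Q Q ℚ := fun j => if j = Fin.last k then A else 1
  have hW (j) : IsLevelDeterministic (W j) φ := by
    by_cases hj : j = Fin.last k
    · simpa [W, hj] using hA
    · simpa [W, hj] using IsLevelDeterministic.one φ
  have hpow : ∀ n : ℕ, onLayer 0 I ᵥ* cyclicLayers W ^ n =
      onLayer (n : Fin (k + 1)) (I ᵥ* A ^ (n / (k + 1))) :=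
    vecMul_pow_of_vecMul_eq (by simp) fun n => by
      rw [onLayer_vecMul_cyclicLayers, Nat.cast_succ, Nat.add_one_div_eq_ite]
      by_cases hn : (n : Fin (k + 1)) = Fin.last k
      · simp [W, hn, pow_succ, vecMul_vecMul]
      · simp [W, hn]
  refine of_isLevelDeterministic (.cyclicLayers hW) (onLayer 0 I) (onLayer i F) fun n => ?_
  rw [hpow, onLayer_dotProduct_onLayer, hu]

lemma finset_sum {ι : Type*} (s : Finset ι) {f : ι → ℕ → ℚ}
    (h : ∀ i ∈ s, LevelRecognizable (f i)) : LevelRecognizable (∑ i ∈ s, f i) :=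
  sum_induction f LevelRecognizable (fun _ _ => add) zero h

lemma shuffle {k : ℕ} (hk : 1 ≤ k) {us : Fin k → ℕ → ℚ} {w : ℕ → ℚ}
    (hw : ∀ (n : ℕ) (i : Fin k), w (k * n + i) = us i n) (hus : ∀ i, LevelRecognizable (us i)) :
    LevelRecognizable w := by
  obtain ⟨k, rfl⟩ : ∃ k', k = k' + 1 := ⟨k - 1, by omega⟩
  have hsum : w = ∑ i, fun n : ℕ => if (n : Fin (k + 1)) = i then us i (n / (k + 1)) else 0 := by
    funext n
    rw [Finset.sum_apply, Fintype.sum_ite_eq, ← hw, Fin.val_natCast, Nat.div_add_mod]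
  rw [hsum]
  exact finset_sum _ fun i _ => (hus i).stretch k i

theorem exists_recognizes_polyAmbiguous (h : LevelRecognizable u) :
    ∃ (d : ℕ) (M : Matrix (Fin d) (Fin d) ℚ) (I F : Fin d → ℚ),
      Recognizes M I F u ∧ PolyAmbiguous M I F := by
  obtain ⟨Q, _, _, α, _, M, I, F, φ, hM, hu⟩ := h
  let e := Fintype.equivFin Q
  refine ⟨_, M.submatrix e.symm e.symm, I ∘ e.symm, F ∘ e.symm, fun n => ?_,
    (hM.submatrix e.symm.injective).polyAmbiguous⟩
  have hpow : M.submatrix e.symm e.symm ^ n = (M ^ n).submatrix e.symm e.symm :=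
    (map_pow (reindexAlgEquiv ℚ ℚ e) M n).symm
  rw [hu, hpow, submatrix_mulVec_equiv, ← dotProduct_mulVec, dotProduct_comp_equiv_symm]
  simp [Function.comp_assoc]

end LevelRecognizable

/-- Every sequence in PolyRat is recognized by a polynomially ambiguous
weighted automaton over a unary alphabet. -/
theorem polyRat_recognized_by_polyAmbiguous_wa (u : ℕ → ℚ) (hu : PolyRat u) :
    ∃ (d : ℕ) (M : Matrix (Fin d) (Fin d) ℚ) (I F : Fin d → ℚ),
      Recognizes M I F u ∧ PolyAmbiguous M I F := by
  refine LevelRecognizable.exists_recognizes_polyAmbiguous ?_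
  induction hu with
  | arith _ _ _ _ hs => exact .of_arith hs
  | geo _ _ _ _ hs => exact .of_geom hs
  | sum _ _ _ _ hu hv => exact hu.add hv
  | had _ _ _ _ hu hv => exact hu.mul hv
  | shift _ _ _ _ _ hs hu => exact hu.shift hs
  | shuffle _ hk _ _ hw _ hus => exact .shuffle hk hw hus
end

section
/- The class of linear recurrence sequences over ℚ is the smallest class of sequences that contains all sequences of finite support and is closed under sum, Cauchy product, and Kleene star (where Kleene star u* = Σ_{n≥0} u^n, with u^n the n-fold Cauchy power, is applied only to sequences u with u_0 = 0). -/
/-- Cauchy product of sequences: `(u·v)_n = Σ_{p+q=n} u_p · v_q`. -/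
def cauchyProd (u v : ℕ → ℚ) : ℕ → ℚ :=
  fun n => ∑ p ∈ Finset.range (n + 1), u p * v (n - p)

/-- `m`-fold Cauchy power: `u^0 = (1,0,0,…)` and `u^(m+1) = u^m · u`. -/
def cauchyPow (u : ℕ → ℚ) : ℕ → (ℕ → ℚ)
  | 0 => fun n => if n = 0 then 1 else 0
  | m + 1 => cauchyProd (cauchyPow u m) u

/-- Kleene star of a sequence with `u 0 = 0`: `(u*)_n = Σ_{m≥0} (u^m)_n`, which is the
finite sum over `m ≤ n` since `(u^m)_n = 0` for `m > n`. -/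
def kleeneStar (u : ℕ → ℚ) : ℕ → ℚ :=
  fun n => ∑ m ∈ Finset.range (n + 1), cauchyPow u m n

/-- The smallest class of sequences containing all finitely supported sequences and
closed under sum, Cauchy product, and Kleene star (applied only to sequences whose
first entry is 0). -/
inductive RatClass : (ℕ → ℚ) → Prop where
  | fin (u : ℕ → ℚ) (h : (Function.support u).Finite) : RatClass u
  | sum (u v : ℕ → ℚ) (hu : RatClass u) (hv : RatClass v) : RatClass (fun n => u n + v n)
  | cauchy (u v : ℕ → ℚ) (hu : RatClass u) (hv : RatClass v) : RatClass (cauchyProd u v)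
  | star (u : ℕ → ℚ) (h0 : u 0 = 0) (hu : RatClass u) : RatClass (kleeneStar u)

/-! A sequence is an LRS exactly when its generating function is `P / Q` with polynomials `P, Q`
and `Q(0) = 1`: the recurrence with coefficients `aᵢ` says that `(1 - ∑ aᵢ Xⁱ⁺¹) · f` is a
polynomial. Such fractions contain the polynomials and are closed under `+`, `·` and
`f ↦ 1 / (1 - f)`, which is the generating function of the Kleene star. Conversely
`P / Q = P · (1 - (1 - Q))*`, where `P` and `1 - Q` are finitely supported and `1 - Q` has no
constant term. -/

open PowerSeries Finset
open scoped Polynomial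

section PowerSeries

variable {R : Type*} [Semiring R]

theorem PowerSeries.mk_injective : Function.Injective (mk : (ℕ → R) → R⟦X⟧) :=
  fun u v h => funext fun n => by simpa using congrArg (coeff n) h

theorem PowerSeries.coeff_pow_eq_zero_of_lt {f : R⟦X⟧} (hf : constantCoeff f = 0) {m n : ℕ}
    (h : n < m) : coeff n (f ^ m) = 0 :=
  coeff_of_lt_order n ((Nat.cast_lt.2 h).trans_le (le_order_pow_of_constantCoeff_eq_zero m hf))

theorem PowerSeries.coe_trunc_eq_self {f : R⟦X⟧} {N : ℕ} (hf : ∀ n, N ≤ n → coeff n f = 0) :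
    (trunc N f : R⟦X⟧) = f := by
  ext n
  rw [Polynomial.coeff_coe, coeff_trunc]
  split_ifs with h
  · rfl
  · exact (hf n (not_lt.1 h)).symm

theorem Polynomial.support_coeff_finite (P : R[X]) : (Function.support P.coeff).Finite :=
  P.support.finite_toSet.subset fun _ hn => Polynomial.mem_support_iff.2 hn

end PowerSeries

theorem mk_cauchyProd (u v : ℕ → ℚ) : mk (cauchyProd u v) = mk u * mk v := by
  ext n
  rw [coeff_mul, Finset.Nat.sum_antidiagonal_eq_sum_range_succ_mk]
  simp [cauchyProd]

theorem mk_cauchyPow (u : ℕ → ℚ) (m : ℕ) : mk (cauchyPow u m) = mk u ^ m := by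
  induction m with
  | zero => ext n; simp [cauchyPow, coeff_one]
  | succ m ih => rw [cauchyPow, mk_cauchyProd, ih, pow_succ]

theorem coe_mul_mk (Q : ℚ[X]) (u : ℕ → ℚ) : (Q : ℚ⟦X⟧) * mk u = mk (cauchyProd Q.coeff u) := by
  rw [mk_cauchyProd, Polynomial.coe_def]

/-- Up to degree `n`, `f*` agrees with the geometric sum `∑_{m ≤ n} fᵐ`, since `fᵐ` has no
coefficient below `m`. -/
theorem one_sub_mk_mul_mk_kleeneStar {u : ℕ → ℚ} (h0 : u 0 = 0) :
    (1 - mk u) * mk (kleeneStar u) = 1 := by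
  have hf : constantCoeff (mk u) = 0 := h0
  have htrunc : ∀ n, trunc (n + 1) (mk (kleeneStar u)) =
      trunc (n + 1) (∑ m ∈ range (n + 1), mk u ^ m) := by
    intro n
    ext j
    rw [coeff_trunc, coeff_trunc]
    split_ifs with hj
    · have hpow : ∀ m, cauchyPow u m j = coeff j (mk u ^ m) := by
        intro m; rw [← mk_cauchyPow, coeff_mk]
      simp only [coeff_mk, kleeneStar, map_sum, hpow]
      refine sum_subset (range_subset_range.2 hj) fun m _ hm => ?_
      exact coeff_pow_eq_zero_of_lt hf (by simpa using hm)
    · rfl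
  ext n
  rw [coeff_mul_eq_coeff_trunc_mul_trunc _ _ n.lt_succ_self, htrunc,
    ← coeff_mul_eq_coeff_trunc_mul_trunc _ _ n.lt_succ_self, mul_neg_geom_sum, map_sub,
    coeff_pow_eq_zero_of_lt hf n.lt_succ_self, sub_zero]

def HasRationalGF (u : ℕ → ℚ) : Prop :=
  ∃ P Q : ℚ[X], Q.coeff 0 = 1 ∧ (Q : ℚ⟦X⟧) * mk u = P

namespace HasRationalGF

theorem of_support_finite {u : ℕ → ℚ} (h : (Function.support u).Finite) : HasRationalGF u := by
  obtain ⟨N, hN⟩ := h.bddAbove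
  refine ⟨trunc (N + 1) (mk u), 1, Polynomial.coeff_one_zero, ?_⟩
  rw [Polynomial.coe_one, one_mul, coe_trunc_eq_self fun n hn => ?_]
  by_contra hne
  exact absurd (hN (Function.mem_support.2 (by simpa using hne))) (by omega)

theorem add {u v : ℕ → ℚ} (hu : HasRationalGF u) (hv : HasRationalGF v) :
    HasRationalGF (fun n => u n + v n) := by
  obtain ⟨P₁, Q₁, hQ₁, h₁⟩ := hu
  obtain ⟨P₂, Q₂, hQ₂, h₂⟩ := hv
  refine ⟨P₁ * Q₂ + P₂ * Q₁, Q₁ * Q₂, by simp [Polynomial.mul_coeff_zero, hQ₁, hQ₂], ?_⟩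
  have hmk : mk (fun n => u n + v n) = mk u + mk v := by ext; simp
  rw [hmk]
  push_cast
  linear_combination (Q₂ : ℚ⟦X⟧) * h₁ + (Q₁ : ℚ⟦X⟧) * h₂

theorem cauchy {u v : ℕ → ℚ} (hu : HasRationalGF u) (hv : HasRationalGF v) :
    HasRationalGF (cauchyProd u v) := by
  obtain ⟨P₁, Q₁, hQ₁, h₁⟩ := hu
  obtain ⟨P₂, Q₂, hQ₂, h₂⟩ := hv
  refine ⟨P₁ * P₂, Q₁ * Q₂, by simp [Polynomial.mul_coeff_zero, hQ₁, hQ₂], ?_⟩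
  rw [mk_cauchyProd]
  push_cast
  linear_combination (Q₂ * mk v : ℚ⟦X⟧) * h₁ + (P₁ : ℚ⟦X⟧) * h₂

/-- If `Q f = P` with `f(0) = 0`, then `(Q - P) f* = Q`. -/
theorem star {u : ℕ → ℚ} (h0 : u 0 = 0) (hu : HasRationalGF u) :
    HasRationalGF (kleeneStar u) := by
  obtain ⟨P, Q, hQ, h⟩ := hu
  have hP : P.coeff 0 = 0 := by
    simpa [hQ, h0] using (congrArg (coeff 0) h).symm
  refine ⟨Q, Q - P, by simp [hQ, hP], ?_⟩
  have hstar := one_sub_mk_mul_mk_kleeneStar h0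
  push_cast
  linear_combination (Q : ℚ⟦X⟧) * hstar + mk (kleeneStar u) * h

end HasRationalGF

theorem RatClass.hasRationalGF {u : ℕ → ℚ} (h : RatClass u) : HasRationalGF u := by
  induction h with
  | fin u h => exact .of_support_finite h
  | sum u v _ _ ihu ihv => exact ihu.add ihv
  | cauchy u v _ _ ihu ihv => exact ihu.cauchy ihv
  | star u h0 _ ihu => exact ihu.star h0

/-- `P / Q = P · (1 - (1 - Q))*`, and `1 - Q` has no constant term. -/
theorem HasRationalGF.ratClass {u : ℕ → ℚ} (h : HasRationalGF u) : RatClass u := by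
  obtain ⟨P, Q, hQ, h⟩ := h
  set w := (1 - Q).coeff
  have hw0 : w 0 = 0 := by simp [w, hQ]
  have hQstar : (Q : ℚ⟦X⟧) * mk (kleeneStar w) = 1 := by
    simpa [w, ← Polynomial.coe_def] using one_sub_mk_mul_mk_kleeneStar hw0
  have hu : u = cauchyProd P.coeff (kleeneStar w) := by
    apply mk_injective
    rw [mk_cauchyProd, ← Polynomial.coe_def, ← h]
    linear_combination (-mk u) * hQstar
  rw [hu]
  exact .cauchy _ _ (.fin _ P.support_coeff_finite)
    (.star _ hw0 (.fin _ (1 - Q).support_coeff_finite))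

theorem IsLRS.hasRationalGF {u : ℕ → ℚ} (h : IsLRS u) : HasRationalGF u := by
  obtain ⟨k, -, a, hrec⟩ := h
  set Q : ℚ[X] := 1 - ∑ i : Fin k, Polynomial.C (a i) * Polynomial.X ^ ((i : ℕ) + 1)
  have hQ : Q.coeff 0 = 1 := by simp [Q, Polynomial.coeff_X_pow]
  refine ⟨trunc k (Q * mk u), Q, hQ, (coe_trunc_eq_self fun n hn => ?_).symm⟩
  have hterm : ∀ i : Fin k, u (n - k + (k - 1 - (i : ℕ))) = u (n - ((i : ℕ) + 1)) := fun i => by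
    congr 1; omega
  have hQcoe : (Q : ℚ⟦X⟧) = 1 - ∑ i : Fin k, C (a i) * X ^ ((i : ℕ) + 1) := by
    simp only [Q, ← Polynomial.coeToPowerSeries.ringHom_apply, map_sub, map_one, map_sum, map_mul,
      map_pow]
    simp
  simp only [hQcoe, sub_mul, one_mul, sum_mul, mul_assoc, map_sub, map_sum, coeff_C_mul,
    coeff_X_pow_mul', coeff_mk]
  rw [← Nat.sub_add_cancel hn, hrec, Nat.sub_add_cancel hn]
  simp [hterm, show ∀ i : Fin k, (i : ℕ) + 1 ≤ n from fun i => by omega]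

theorem HasRationalGF.isLRS {u : ℕ → ℚ} (h : HasRationalGF u) : IsLRS u := by
  obtain ⟨P, Q, hQ, h⟩ := h
  set k := Q.natDegree + P.natDegree + 1
  refine ⟨k, by omega, fun i => -Q.coeff ((i : ℕ) + 1), fun n => ?_⟩
  have hcoeff : cauchyProd Q.coeff u (n + k) = 0 := by
    rw [← coeff_mk (n + k) (cauchyProd Q.coeff u), ← coe_mul_mk, h, Polynomial.coeff_coe]
    exact Polynomial.coeff_eq_zero_of_natDegree_lt (by omega)
  have hsupp : cauchyProd Q.coeff u (n + k) =
      ∑ j ∈ range (k + 1), Q.coeff j * u (n + k - j) := by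
    refine (sum_subset (range_subset_range.2 (by omega)) fun j _ hj => ?_).symm
    rw [Polynomial.coeff_eq_zero_of_natDegree_lt (by simp only [mem_range, not_lt] at hj; omega), zero_mul]
  rw [hsupp, sum_range_succ', hQ, one_mul, Nat.sub_zero, ← Fin.sum_univ_eq_sum_range] at hcoeff
  have hterm : ∀ i : Fin k, n + k - ((i : ℕ) + 1) = n + (k - 1 - (i : ℕ)) := fun i => by omega
  simp only [hterm] at hcoeff
  simp only [neg_mul, sum_neg_distrib]
  linarith

/-- The class of linear recurrence sequences over ℚ is the smallest class of
sequences containing all sequences of finite support and closed under sum, Cauchy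
product, and Kleene star. -/
theorem isLRS_iff_ratClass (u : ℕ → ℚ) : IsLRS u ↔ RatClass u :=
  ⟨fun h => h.hasRationalGF.ratClass, fun h => h.hasRationalGF.isLRS⟩
end

section
/- Let Q ∈ ℚ[x] be a nonzero polynomial with Q(0) ≠ 0 such that every complex root of Q is a root of a rational number. Then Q divides in ℚ[x] some product ∏_{i=1}^m (1 − λ_i·x^{ℓ_i}) with λ_i ∈ ℚ and integers ℓ_i ≥ 1. -/
/-!
Over `ℂ`, `Q` is a nonzero constant times `∏ (X - z)` over its roots `z`. Such a root is nonzero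
since `Q(0) ≠ 0`, so `z ^ ℓ = λ` for some `ℓ ≥ 1` and nonzero `λ ∈ ℚ`, whence `X - z` divides
`1 - λ⁻¹ X ^ ℓ`. Divisibility in `ℂ[X]` between polynomials over `ℚ` descends to `ℚ[X]`.
-/

open Polynomial

namespace Polynomial

theorem X_sub_C_dvd_one_sub_C_inv_mul_X_pow {L : Type*} [Field L] {z c : L} {n : ℕ}
    (hc : c ≠ 0) (h : z ^ n = c) : X - C z ∣ 1 - C c⁻¹ * X ^ n := by
  rw [dvd_iff_isRoot, IsRoot, eval_sub, eval_one, eval_mul, eval_C, eval_pow, eval_X, h,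
    inv_mul_cancel₀ hc, sub_self]

theorem ne_zero_of_mem_roots_map {K L : Type*} [CommRing K] [CommRing L] [IsDomain L]
    {f : K →+* L} {Q : K[X]} (h0 : f (Q.eval 0) ≠ 0) {z : L} (hz : z ∈ (Q.map f).roots) :
    z ≠ 0 := by
  rintro rfl
  exact h0 (eval_zero_map f Q ▸ isRoot_of_mem_roots hz)

theorem dvd_prod_of_X_sub_C_dvd_map {K L : Type*} [Field K] [Field L] [IsAlgClosed L]
    (f : K →+* L) {Q : K[X]} (hQ : Q ≠ 0) (g : L → K[X])
    (h : ∀ z ∈ (Q.map f).roots, X - C z ∣ (g z).map f) :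
    Q ∣ ((Q.map f).roots.map g).prod := by
  rw [← map_dvd_map' f, Polynomial.map_multiset_prod, Multiset.map_map]
  conv_lhs => rw [(IsAlgClosed.splits (Q.map f)).eq_prod_roots]
  rw [C_mul_dvd (leadingCoeff_ne_zero.2 (Q.map_ne_zero hQ))]
  exact Multiset.prod_dvd_prod_of_dvd _ _ h

end Polynomial

theorem IsRootOfRational.exists_pow_eq_ne_zero {z : ℂ} (hz : IsRootOfRational z) (hz0 : z ≠ 0) :
    ∃ n, 1 ≤ n ∧ ∃ q : ℚ, q ≠ 0 ∧ z ^ n = q := by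
  obtain ⟨n, hn, q, hq⟩ := hz
  refine ⟨n, hn, q, ?_, hq⟩
  rintro rfl
  exact pow_ne_zero n hz0 (by simpa using hq)

/-- If `Q ∈ ℚ[x]` is nonzero, `Q(0) ≠ 0`, and every complex root of `Q` is a
root of a rational number, then `Q` divides in `ℚ[x]` some product
`∏_{i=1}^m (1 − λ_i·x^{ℓ_i})` with `λ_i ∈ ℚ` and integers `ℓ_i ≥ 1`. -/
theorem rootOfRational_poly_dvd_product (Q : Polynomial ℚ) (hQ : Q ≠ 0)
    (h0 : Q.eval 0 ≠ 0)
    (hroots : ∀ z : ℂ, Polynomial.aeval z Q = 0 → IsRootOfRational z) :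
    ∃ (m : ℕ) (lam : Fin m → ℚ) (l : Fin m → ℕ), (∀ i, 1 ≤ l i) ∧
      Q ∣ ∏ i : Fin m, (1 - Polynomial.C (lam i) * Polynomial.X ^ (l i)) := by
  set f := algebraMap ℚ ℂ
  have hroot : ∀ z ∈ (Q.map f).roots, ∃ n, 1 ≤ n ∧ ∃ q : ℚ, q ≠ 0 ∧ z ^ n = q := fun z hz =>
    (hroots z ((mem_roots_map hQ).1 hz)).exists_pow_eq_ne_zero
      (ne_zero_of_mem_roots_map (by simpa using h0) hz)
  choose! n hn q hq0 hq using hroot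
  set L := (Q.map f).roots.toList
  refine ⟨L.length, fun i => (q L[i.1])⁻¹, fun i => n L[i.1],
    fun i => hn _ (Multiset.mem_toList.1 (List.getElem_mem _)), ?_⟩
  rw [Fin.prod_univ_fun_getElem L fun z => 1 - C (q z)⁻¹ * X ^ n z, ← Multiset.prod_coe,
    ← Multiset.map_coe, Multiset.coe_toList]
  refine dvd_prod_of_X_sub_C_dvd_map f hQ _ fun z hz => ?_
  simpa using X_sub_C_dvd_one_sub_C_inv_mul_X_pow (Rat.cast_ne_zero.2 (hq0 z hz)) (hq z hz)
end

section
/- Let P, Q ∈ ℚ[x] with Q(0) ≠ 0 and suppose every complex root of Q is a root of a rational number. Then there exist finitely many rational polynomials R_1,…,R_m, rationals λ_1,…,λ_m, and integers ℓ_i ≥ 1, k_i ≥ 1 such that, in ℚ[[x]], P·Q⁻¹ = Σ_{i=1}^m R_i·((1 − λ_i·x^{ℓ_i})^{k_i})⁻¹, where the inverses are taken in the ring of formal power series ℚ[[x]]. -/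
open Polynomial
open scoped PowerSeries

namespace PowerSeries

variable {k : Type*} [Field k]

theorem inv_eq_mul_inv_of_mul_eq {φ σ ψ : k⟦X⟧} (hψ : constantCoeff ψ ≠ 0) (h : φ * σ = ψ) :
    φ⁻¹ = σ * ψ⁻¹ := by
  have hσ : constantCoeff σ ≠ 0 := right_ne_zero_of_mul (by rwa [← map_mul, h])
  rw [← h, PowerSeries.mul_inv_rev, ← mul_assoc, PowerSeries.mul_inv_cancel σ hσ, one_mul]

theorem mul_inv_eq_of_mul_add_mul_eq_one {φ ψ a b : k⟦X⟧} (hφ : constantCoeff φ ≠ 0)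
    (hψ : constantCoeff ψ ≠ 0) (h : a * φ + b * ψ = 1) : (φ * ψ)⁻¹ = a * ψ⁻¹ + b * φ⁻¹ := by
  rw [PowerSeries.mul_inv_rev]
  linear_combination (ψ⁻¹ * φ⁻¹) * h.symm + a * ψ⁻¹ * PowerSeries.mul_inv_cancel φ hφ +
    b * φ⁻¹ * PowerSeries.mul_inv_cancel ψ hψ

end PowerSeries

section PartialFractions

variable {k : Type*} [Field k]

variable (k) in
def partialFractionSums : AddSubmonoid k⟦X⟧ where
  carrier := {f | ∃ (m : ℕ) (R : Fin m → k[X]) (lam : Fin m → k) (l kk : Fin m → ℕ),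
    (∀ i, 1 ≤ l i) ∧ (∀ i, 1 ≤ kk i) ∧
    f = ∑ i, (R i : k⟦X⟧) * ((1 - PowerSeries.C (lam i) * PowerSeries.X ^ l i) ^ kk i)⁻¹}
  zero_mem' := ⟨0, Fin.elim0, Fin.elim0, Fin.elim0, Fin.elim0, (·.elim0), (·.elim0), by simp⟩
  add_mem' := by
    rintro _ _ ⟨m, R, lam, l, kk, hl, hkk, rfl⟩ ⟨m', R', lam', l', kk', hl', hkk', rfl⟩
    refine ⟨m + m', Fin.append R R', Fin.append lam lam', Fin.append l l', Fin.append kk kk',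
      Fin.addCases (by simpa using hl) (by simpa using hl'),
      Fin.addCases (by simpa using hkk) (by simpa using hkk'), ?_⟩
    simp [Fin.sum_univ_add]

theorem mem_partialFractionSums {f : k⟦X⟧} :
    f ∈ partialFractionSums k ↔ ∃ (m : ℕ) (R : Fin m → k[X]) (lam : Fin m → k) (l kk : Fin m → ℕ),
      (∀ i, 1 ≤ l i) ∧ (∀ i, 1 ≤ kk i) ∧
      f = ∑ i, (R i : k⟦X⟧) * ((1 - PowerSeries.C (lam i) * PowerSeries.X ^ l i) ^ kk i)⁻¹ :=
  Iff.rfl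

theorem coe_mul_inv_pow_mem_partialFractionSums (R : k[X]) (lam : k) {l : ℕ} (hl : 1 ≤ l)
    (n : ℕ) :
    (R : k⟦X⟧) * ((1 - PowerSeries.C lam * PowerSeries.X ^ l) ^ n)⁻¹ ∈ partialFractionSums k := by
  rw [mem_partialFractionSums]
  rcases n.eq_zero_or_pos with rfl | hn
  · exact ⟨1, fun _ => R, fun _ => 0, fun _ => 1, fun _ => 1, fun _ => le_rfl, fun _ => le_rfl,
      by simp⟩
  · exact ⟨1, fun _ => R, fun _ => lam, fun _ => l, fun _ => n, fun _ => hl, fun _ => hn,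
      by simp⟩

theorem coe_mem_partialFractionSums (R : k[X]) : (R : k⟦X⟧) ∈ partialFractionSums k := by
  simpa using coe_mul_inv_pow_mem_partialFractionSums R 0 le_rfl 0

def DvdOneSubCMulXPow (p : k[X]) : Prop := ∃ (lam : k) (l : ℕ), 1 ≤ l ∧ p ∣ 1 - C lam * X ^ l

theorem coe_mul_inv_pow_mem_partialFractionSums_of_dvdOneSubCMulXPow {p : k[X]}
    (hp : DvdOneSubCMulXPow p) (n : ℕ) (P : k[X]) :
    (P : k⟦X⟧) * ((p ^ n : k[X]) : k⟦X⟧)⁻¹ ∈ partialFractionSums k := by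
  obtain ⟨lam, l, hl, s, hs⟩ := hp
  have hcoe : ((p ^ n : k[X]) : k⟦X⟧) * (s : k⟦X⟧) ^ n =
      (1 - PowerSeries.C lam * PowerSeries.X ^ l) ^ n := by
    rw [Polynomial.coe_pow, ← mul_pow, ← Polynomial.coe_mul, ← hs]
    simp
  have hconst : PowerSeries.constantCoeff
      ((1 - PowerSeries.C lam * PowerSeries.X ^ l : k⟦X⟧) ^ n) ≠ 0 := by
    simp [zero_pow (show l ≠ 0 by omega)]
  rw [PowerSeries.inv_eq_mul_inv_of_mul_eq hconst hcoe, ← mul_assoc]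
  exact_mod_cast coe_mul_inv_pow_mem_partialFractionSums (P * s ^ n) lam hl n

theorem coe_mul_inv_mem_partialFractionSums {Q : k[X]} (hQ0 : Q.coeff 0 ≠ 0)
    (hQ : ∀ p, Irreducible p → p ∣ Q → DvdOneSubCMulXPow p) (P : k[X]) :
    (P : k⟦X⟧) * (Q : k⟦X⟧)⁻¹ ∈ partialFractionSums k := by
  induction Q using UniqueFactorizationMonoid.induction_on_coprime generalizing P with
  | h0 => simp at hQ0
  | @h1 Q hu =>
    obtain ⟨Q', hQ'⟩ := hu.exists_right_inv
    have hcoe : (Q : k⟦X⟧) * Q' = 1 := by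
      exact_mod_cast congrArg (fun f : k[X] => (f : k⟦X⟧)) hQ'
    rw [PowerSeries.inv_eq_mul_inv_of_mul_eq (by simp) hcoe, inv_one, mul_one]
    exact_mod_cast coe_mem_partialFractionSums (P * Q')
  | @hpr p n hp =>
    rcases n.eq_zero_or_pos with rfl | hn
    · simpa using coe_mem_partialFractionSums P
    exact coe_mul_inv_pow_mem_partialFractionSums_of_dvdOneSubCMulXPow
      (hQ p hp.irreducible (dvd_pow_self p hn.ne')) n P
  | @hcp x y hxy hx hy =>
    obtain ⟨a, b, hab⟩ := hxy.isCoprime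
    rw [mul_coeff_zero] at hQ0
    have hcoe : (a : k⟦X⟧) * x + (b : k⟦X⟧) * y = 1 := by
      exact_mod_cast congrArg (fun f : k[X] => (f : k⟦X⟧)) hab
    rw [Polynomial.coe_mul, PowerSeries.mul_inv_eq_of_mul_add_mul_eq_one
      (by simpa using left_ne_zero_of_mul hQ0) (by simpa using right_ne_zero_of_mul hQ0) hcoe,
      mul_add, ← mul_assoc, ← mul_assoc]
    refine add_mem ?_ ?_
    · exact_mod_cast hy (right_ne_zero_of_mul hQ0)
        (fun p hp hpy => hQ p hp (dvd_mul_of_dvd_right hpy x)) (P * a)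
    · exact_mod_cast hx (left_ne_zero_of_mul hQ0)
        (fun p hp hpx => hQ p hp (dvd_mul_of_dvd_left hpx y)) (P * b)

end PartialFractions

theorem IsRootOfRational.dvdOneSubCMulXPow {z : ℂ} (hzq : IsRootOfRational z) (hz : z ≠ 0)
    {p : ℚ[X]} (hp : Irreducible p) (hpz : aeval z p = 0) : DvdOneSubCMulXPow p := by
  obtain ⟨m, hm, q, hq⟩ := hzq
  have hq0 : q ≠ 0 := by
    rintro rfl
    exact hz (pow_eq_zero_iff (by omega : m ≠ 0) |>.mp (by simpa using hq))
  have hdvd : p ∣ X ^ m - C q := by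
    rw [minpoly.Irreducible.eq_minpoly hp hpz, C_mul_dvd (leadingCoeff_ne_zero.mpr hp.ne_zero)]
    exact minpoly.dvd ℚ z (by simp [hq])
  have hCq : C q⁻¹ * C q = 1 := by rw [← C_mul, inv_mul_cancel₀ hq0, C_1]
  have hbinomial : 1 - C q⁻¹ * X ^ m = C (-q⁻¹) * (X ^ m - C q) := by
    rw [C_neg]
    linear_combination -hCq
  exact ⟨q⁻¹, m, hm, hbinomial ▸ dvd_mul_of_dvd_right hdvd _⟩

/-- If `P, Q ∈ ℚ[x]`, `Q(0) ≠ 0`, and every complex root of `Q` is a root of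
a rational number, then in `ℚ[[x]]` one can write
`P·Q⁻¹ = Σ_{i=1}^m R_i · ((1 − λ_i·x^{ℓ_i})^{k_i})⁻¹` with `R_i ∈ ℚ[x]`, `λ_i ∈ ℚ`, and
integers `ℓ_i, k_i ≥ 1`, where the inverses are taken in `ℚ[[x]]`. -/
theorem partial_fraction_decomposition (P Q : Polynomial ℚ) (h0 : Q.eval 0 ≠ 0)
    (hroots : ∀ z : ℂ, Polynomial.aeval z Q = 0 → IsRootOfRational z) :
    ∃ (m : ℕ) (R : Fin m → Polynomial ℚ) (lam : Fin m → ℚ) (l kk : Fin m → ℕ),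
      (∀ i, 1 ≤ l i) ∧ (∀ i, 1 ≤ kk i) ∧
      (P : PowerSeries ℚ) * (Q : PowerSeries ℚ)⁻¹ =
        ∑ i : Fin m, (R i : PowerSeries ℚ) *
          ((1 - PowerSeries.C (lam i) * PowerSeries.X ^ (l i)) ^ (kk i))⁻¹ := by
  have hQ0 : Q.coeff 0 ≠ 0 := by rwa [coeff_zero_eq_eval_zero]
  refine mem_partialFractionSums.1
    (coe_mul_inv_mem_partialFractionSums hQ0 (fun p hp hpQ => ?_) P)
  obtain ⟨z, hpz⟩ := IsAlgClosed.exists_aeval_eq_zero ℂ p (degree_pos_of_irreducible hp).ne'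
  have hQz : aeval z Q = 0 := by
    obtain ⟨r, rfl⟩ := hpQ
    simp [hpz]
  have hz : z ≠ 0 := by
    rintro rfl
    exact hQ0 (by simpa [← coeff_zero_eq_aeval_zero'] using hQz)
  exact (hroots z hQz).dvdOneSubCMulXPow hz hp hpz
end

section
/- Let u : ℕ → ℚ be a sequence for which there exist N ∈ ℕ and a, b ∈ ℚ such that u_{n+1} = a·u_n + b for all n ≥ N. Then u belongs to PolyRat. -/
lemma affine_polyRat (u : ℕ → ℚ) (a b : ℚ) (h : ∀ n, u (n + 1) = a * u n + b) :
    PolyRat u := by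
  by_cases ha : a = 1
  · exact PolyRat.arith (u 0) b u rfl (fun n => by rw [h n, ha, one_mul])
  · set c : ℚ := b / (a - 1) with hc
    have hac : a * c - c = b := by
      rw [hc]
      have h1 : a - 1 ≠ 0 := sub_ne_zero.mpr ha
      field_simp
    have hgeo : PolyRat (fun n => u n + c) :=
      PolyRat.geo (u 0 + c) a _ rfl (fun n => by simp only [h n]; linarith [hac])
    have hconst : PolyRat (fun _ : ℕ => -c) :=
      PolyRat.arith (-c) 0 _ rfl (fun n => by ring)
    have := PolyRat.sum _ _ hgeo hconst
    have heq : (fun n => (u n + c) + -c) = u := by funext n; ring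
    rwa [heq] at this

/-- If `u (n+1) = a·u n + b` for all `n ≥ N`, then `u` belongs to PolyRat. -/

theorem eventually_affine_recurrence_mem_polyRat (u : ℕ → ℚ) (N : ℕ) (a b : ℚ)
    (h : ∀ n, N ≤ n → u (n + 1) = a * u n + b) : PolyRat u := by
  induction N generalizing u with
  | zero => exact affine_polyRat u a b (fun n => h n (Nat.zero_le n))
  | succ N ih =>
    have hv : PolyRat (fun n => u (n + 1)) :=
      ih (fun n => u (n + 1)) (fun n hn => h (n + 1) (Nat.succ_le_succ hn))
    exact PolyRat.shift (u 0) _ u hv rfl (fun n => rfl)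
end

section
/- Let A = (Q, M, I, F) be a weighted automaton over a unary alphabet and let q ∈ Q be a state such that: (i) there is a path of nonzero transitions of some length p from an initial state (a state q_0 with I(q_0) ≠ 0) to q; (ii) there is a path of nonzero transitions of some length s from q to a final state (a state q_f with F(q_f) ≠ 0); and (iii) there are two distinct closed walks of the same length L ≥ 1 of nonzero transitions from q to q. Then a_A(p + n·L + s) ≥ 2^n for all n ≥ 0; in particular A is not polynomially ambiguous. -/
/-- A walk of nonzero transitions of length `n` in the transition matrix `M`. -/
def IsWalk {d : ℕ} (M : Matrix (Fin d) (Fin d) ℚ) (n : ℕ) (w : Fin (n + 1) → Fin d) : Prop :=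
  ∀ i : Fin n, M (w i.castSucc) (w i.succ) ≠ 0

open Filter Asymptotics Polynomial in
theorem Polynomial.eventually_eval_lt_pow (P : ℕ[X]) {b : ℕ} (hb : 1 < b) :
    ∀ᶠ n in atTop, P.eval n < b ^ n := by
  set Q := P.map (Nat.castRingHom ℝ)
  have hpow : (fun n : ℕ => (n : ℝ) ^ Q.natDegree) =o[atTop] fun n => (b : ℝ) ^ n :=
    isLittleO_pow_const_const_pow_of_one_lt _ (by exact_mod_cast hb)
  have hQ : (fun n : ℕ => Q.eval (n : ℝ)) =o[atTop] fun n => (b : ℝ) ^ n :=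
    ((Q.isBigO_atTop_of_degree_le (X ^ Q.natDegree) (by simp [degree_le_natDegree])).comp_tendsto
      tendsto_natCast_atTop_atTop).trans_isLittleO (by simpa [Function.comp_def] using hpow)
  filter_upwards [hQ.bound one_half_pos] with n hn
  have hbn : (0 : ℝ) < (b : ℝ) ^ n := by positivity
  have : ((P.eval n : ℕ) : ℝ) ≤ 1 / 2 * b ^ n := by
    simpa [Q, eval_natCast_map, abs_of_pos hbn] using hn
  exact_mod_cast (this.trans_lt (by linarith) : ((P.eval n : ℕ) : ℝ) < (b : ℝ) ^ n)

def walkAppend {α : Type*} {a b : ℕ} (w : Fin (a + 1) → α) (w' : Fin (b + 1) → α) :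
    Fin (a + b + 1) → α :=
  fun i => if h : (i : ℕ) ≤ a then w ⟨i, by omega⟩ else w' ⟨i - a, by omega⟩

section walkAppend

variable {α : Type*} {a b : ℕ} (w : Fin (a + 1) → α) (w' : Fin (b + 1) → α)

theorem walkAppend_apply_left (i : ℕ) (hi : i ≤ a) :
    walkAppend w w' ⟨i, by omega⟩ = w ⟨i, by omega⟩ :=
  dif_pos hi

theorem walkAppend_apply_right (h : w (Fin.last a) = w' 0) (j : ℕ) (hj : j ≤ b) :
    walkAppend w w' ⟨a + j, by omega⟩ = w' ⟨j, by omega⟩ := by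
  rcases j.eq_zero_or_pos with rfl | hj
  · exact (walkAppend_apply_left w w' a le_rfl).trans h
  · simp [walkAppend, show ¬ a + j ≤ a by omega]

theorem walkAppend_zero : walkAppend w w' 0 = w 0 :=
  walkAppend_apply_left w w' 0 (Nat.zero_le a)

theorem walkAppend_last (h : w (Fin.last a) = w' 0) :
    walkAppend w w' (Fin.last (a + b)) = w' (Fin.last b) :=
  walkAppend_apply_right w w' h b le_rfl

theorem walkAppend_inj {v : Fin (a + 1) → α} {v' : Fin (b + 1) → α}
    (hw : w (Fin.last a) = w' 0) (hv : v (Fin.last a) = v' 0) :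
    walkAppend w w' = walkAppend v v' ↔ w = v ∧ w' = v' := by
  refine ⟨fun h => ⟨funext fun ⟨i, hi⟩ => ?_, funext fun ⟨j, hj⟩ => ?_⟩, fun ⟨h, h'⟩ => h ▸ h' ▸ rfl⟩
  · simpa only [walkAppend_apply_left _ _ i (Nat.lt_succ_iff.mp hi)] using
      congrFun h ⟨i, by omega⟩
  · simpa only [walkAppend_apply_right _ _ hw j (Nat.lt_succ_iff.mp hj),
      walkAppend_apply_right _ _ hv j (Nat.lt_succ_iff.mp hj)] using congrFun h ⟨a + j, by omega⟩

theorem IsWalk.append {d : ℕ} {M : Matrix (Fin d) (Fin d) ℚ} {w : Fin (a + 1) → Fin d}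
    {w' : Fin (b + 1) → Fin d} (hw : IsWalk M a w) (hw' : IsWalk M b w')
    (h : w (Fin.last a) = w' 0) : IsWalk M (a + b) (walkAppend w w') := by
  rintro ⟨i, hi⟩
  rcases lt_or_ge i a with hia | hai
  · convert hw ⟨i, hia⟩ using 2
    exacts [walkAppend_apply_left w w' i hia.le, walkAppend_apply_left w w' (i + 1) hia]
  · obtain ⟨j, rfl⟩ := Nat.exists_eq_add_of_le hai
    have hj : j < b := by omega
    convert hw' ⟨j, hj⟩ using 2
    exacts [walkAppend_apply_right w w' h j hj.le, walkAppend_apply_right w w' h (j + 1) hj]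

end walkAppend

def initialWalksTo {d : ℕ} (M : Matrix (Fin d) (Fin d) ℚ) (I : Fin d → ℚ) (q : Fin d) (m : ℕ) :
    Set (Fin (m + 1) → Fin d) :=
  {w | IsWalk M m w ∧ I (w 0) ≠ 0 ∧ w (Fin.last m) = q}

section initialWalksTo

variable {d : ℕ} {M : Matrix (Fin d) (Fin d) ℚ} {I : Fin d → ℚ} {q : Fin d}

theorem card_mul_card_initialWalksTo_le {ι : Type*} {L : ℕ} {c : ι → Fin (L + 1) → Fin d}
    (hc : Function.Injective c) (hwalk : ∀ i, IsWalk M L (c i)) (h0 : ∀ i, c i 0 = q)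
    (hlast : ∀ i, c i (Fin.last L) = q) (m : ℕ) :
    Nat.card ι * Nat.card (initialWalksTo M I q m) ≤ Nat.card (initialWalksTo M I q (m + L)) := by
  let f : ι × initialWalksTo M I q m → initialWalksTo M I q (m + L) := fun ⟨i, w⟩ =>
    have hjoin : w.1 (Fin.last m) = c i 0 := w.2.2.2.trans (h0 i).symm
    ⟨walkAppend w.1 (c i), w.2.1.append (hwalk i) hjoin,
      (walkAppend_zero _ _).symm ▸ w.2.2.1, (walkAppend_last _ _ hjoin).trans (hlast i)⟩
  have hf : Function.Injective f := by
    rintro ⟨i, w⟩ ⟨j, v⟩ h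
    obtain ⟨hwv, hij⟩ := (walkAppend_inj _ _ (w.2.2.2.trans (h0 i).symm)
      (v.2.2.2.trans (h0 j).symm)).1 (congrArg Subtype.val h)
    exact Prod.ext (hc hij) (Subtype.ext hwv)
  rw [← Nat.card_prod]
  exact Nat.card_le_card_of_injective f hf

theorem pow_card_le_card_initialWalksTo {ι : Type*} {L : ℕ} {c : ι → Fin (L + 1) → Fin d}
    (hc : Function.Injective c) (hwalk : ∀ i, IsWalk M L (c i)) (h0 : ∀ i, c i 0 = q)
    (hlast : ∀ i, c i (Fin.last L) = q) {p : ℕ} (hp : (initialWalksTo M I q p).Nonempty)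
    (n : ℕ) : Nat.card ι ^ n ≤ Nat.card (initialWalksTo M I q (p + n * L)) := by
  induction n with
  | zero =>
    have := hp.to_subtype
    rw [zero_mul, add_zero, pow_zero]
    exact Nat.card_pos
  | succ n ih =>
    calc Nat.card ι ^ (n + 1) = Nat.card ι * Nat.card ι ^ n := pow_succ' _ _
      _ ≤ Nat.card ι * Nat.card (initialWalksTo M I q (p + n * L)) := Nat.mul_le_mul_left _ ih
      _ ≤ Nat.card (initialWalksTo M I q (p + n * L + L)) :=
        card_mul_card_initialWalksTo_le hc hwalk h0 hlast _
      _ = Nat.card (initialWalksTo M I q (p + (n + 1) * L)) := by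
        rw [show p + (n + 1) * L = p + n * L + L by ring]

theorem card_initialWalksTo_le_ambiguity {F : Fin d → ℚ} {s : ℕ} {w : Fin (s + 1) → Fin d}
    (hw : IsWalk M s w) (h0 : w 0 = q) (hF : F (w (Fin.last s)) ≠ 0) (m : ℕ) :
    Nat.card (initialWalksTo M I q m) ≤ ambiguity M I F (m + s) :=
  Nat.card_le_card_of_injective
    (fun v => ⟨walkAppend v.1 w, (walkAppend_zero _ _).symm ▸ v.2.2.1,
      (walkAppend_last _ _ (v.2.2.2.trans h0.symm)).symm ▸ hF,
      v.2.1.append hw (v.2.2.2.trans h0.symm)⟩)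
    fun v v' h => Subtype.ext ((walkAppend_inj _ _ (v.2.2.2.trans h0.symm)
      (v'.2.2.2.trans h0.symm)).1 (congrArg Subtype.val h)).1

end initialWalksTo

open Polynomial in
theorem not_polyAmbiguous_of_pow_le {d : ℕ} {M : Matrix (Fin d) (Fin d) ℚ} {I F : Fin d → ℚ}
    {r a b : ℕ} (hr : 1 < r) (h : ∀ n, r ^ n ≤ ambiguity M I F (a + n * b)) :
    ¬ PolyAmbiguous M I F := by
  rintro ⟨P, hP⟩
  obtain ⟨n, hn⟩ := ((P.comp (C a + X * C b)).eventually_eval_lt_pow hr).exists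
  have := (h n).trans (hP _)
  simp only [eval_comp, eval_add, eval_mul, eval_C, eval_X] at hn
  omega

theorem two_loops_exponential_ambiguity_general (d : ℕ) (M : Matrix (Fin d) (Fin d) ℚ)
    (I F : Fin d → ℚ) (q : Fin d) (p s L : ℕ)
    (w₁ : Fin (p + 1) → Fin d) (hw₁ : IsWalk M p w₁)
    (hI : I (w₁ 0) ≠ 0) (hw₁q : w₁ (Fin.last p) = q)
    (w₂ : Fin (s + 1) → Fin d) (hw₂ : IsWalk M s w₂)
    (hw₂q : w₂ 0 = q) (hF : F (w₂ (Fin.last s)) ≠ 0)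
    (c₁ c₂ : Fin (L + 1) → Fin d) (hc₁ : IsWalk M L c₁) (hc₂ : IsWalk M L c₂)
    (hc₁0 : c₁ 0 = q) (hc₁L : c₁ (Fin.last L) = q)
    (hc₂0 : c₂ 0 = q) (hc₂L : c₂ (Fin.last L) = q)
    (hne : c₁ ≠ c₂) :
    (∀ n : ℕ, 2 ^ n ≤ ambiguity M I F (p + n * L + s)) ∧ ¬ PolyAmbiguous M I F := by
  have hc : Function.Injective (fun b : Bool => cond b c₁ c₂) := by
    rintro (_ | _) (_ | _) h
    exacts [rfl, absurd h.symm hne, absurd h hne, rfl]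
  have hlow : ∀ n, 2 ^ n ≤ ambiguity M I F (p + n * L + s) := fun n =>
    calc 2 ^ n = Nat.card Bool ^ n := by rw [Nat.card_eq_fintype_card, Fintype.card_bool]
      _ ≤ Nat.card (initialWalksTo M I q (p + n * L)) :=
        pow_card_le_card_initialWalksTo hc (Bool.forall_bool.2 ⟨hc₂, hc₁⟩)
          (Bool.forall_bool.2 ⟨hc₂0, hc₁0⟩) (Bool.forall_bool.2 ⟨hc₂L, hc₁L⟩)
          ⟨w₁, hw₁, hI, hw₁q⟩ n
      _ ≤ ambiguity M I F (p + n * L + s) := card_initialWalksTo_le_ambiguity hw₂ hw₂q hF _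
  exact ⟨hlow, not_polyAmbiguous_of_pow_le one_lt_two fun n => (hlow n).trans_eq
    (by rw [add_right_comm])⟩

/-- If a state `q` of a weighted automaton is reachable from an initial state
by a walk of length `p` of nonzero transitions, can reach a final state by a walk of
length `s`, and carries two distinct closed walks of the same length `L ≥ 1`, then
`a_A(p + n·L + s) ≥ 2^n` for all `n`; in particular `A` is not polynomially ambiguous. -/
theorem two_loops_exponential_ambiguity (d : ℕ) (M : Matrix (Fin d) (Fin d) ℚ)
    (I F : Fin d → ℚ) (q : Fin d) (p s L : ℕ) (hL : 1 ≤ L)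
    (w₁ : Fin (p + 1) → Fin d) (hw₁ : IsWalk M p w₁)
    (hI : I (w₁ 0) ≠ 0) (hw₁q : w₁ (Fin.last p) = q)
    (w₂ : Fin (s + 1) → Fin d) (hw₂ : IsWalk M s w₂)
    (hw₂q : w₂ 0 = q) (hF : F (w₂ (Fin.last s)) ≠ 0)
    (c₁ c₂ : Fin (L + 1) → Fin d) (hc₁ : IsWalk M L c₁) (hc₂ : IsWalk M L c₂)
    (hc₁0 : c₁ 0 = q) (hc₁L : c₁ (Fin.last L) = q)
    (hc₂0 : c₂ 0 = q) (hc₂L : c₂ (Fin.last L) = q)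
    (hne : c₁ ≠ c₂) :
    (∀ n : ℕ, 2 ^ n ≤ ambiguity M I F (p + n * L + s)) ∧ ¬ PolyAmbiguous M I F :=
  two_loops_exponential_ambiguity_general d M I F q p s L w₁ hw₁ hI hw₁q w₂ hw₂ hw₂q hF c₁ c₂ hc₁
    hc₂ hc₁0 hc₁L hc₂0 hc₂L hne
end

section
/- For every k ≥ 1, the sequence u : ℕ → ℚ defined by u_n = 1^n + 2^n + … + (k+1)^n is recognized by a (k+1)-ambiguous weighted automaton over a unary alphabet, but it is not recognized by any k-ambiguous weighted automaton. -/
open Matrix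

theorem card_le_of_sum_mul_pow_eq {K : Type*} [Field K] {m : ℕ} {ι : Type*} [Fintype ι]
    {c x : Fin m → K} (hc : ∀ j, c j ≠ 0) (hx : Function.Injective x) (a y : ι → K)
    (h : ∀ t : ℕ, ∑ j, c j * x j ^ t = ∑ i, a i * y i ^ t) : m ≤ Fintype.card ι := by
  classical
  -- the Hankel matrix `(∑ j, c j * x j ^ (s + t))_{s t}` is invertible but factors through `ι`
  set V := vandermonde x
  have hfull : (Vᵀ * diagonal c * V).rank = m := by
    refine (rank_of_isUnit _ ?_).trans (Fintype.card_fin m)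
    rw [isUnit_iff_isUnit_det, isUnit_iff_ne_zero, det_mul, det_mul, det_transpose, det_diagonal]
    have hV : V.det ≠ 0 := det_vandermonde_ne_zero_iff.2 hx
    exact mul_ne_zero (mul_ne_zero hV (Finset.prod_ne_zero_iff.2 fun j _ => hc j)) hV
  have hfactor : Vᵀ * diagonal c * V =
      of (fun (s : Fin m) i => y i ^ (s : ℕ)) * of (fun i (t : Fin m) => a i * y i ^ (t : ℕ)) := by
    ext s t
    have hst := h (s + t)
    simp only [pow_add] at hst
    simp only [mul_apply, transpose_apply, V, vandermonde_apply, of_apply, diagonal_apply,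
      mul_ite, mul_zero, Finset.sum_ite_eq', Finset.mem_univ, if_true]
    convert hst using 2 <;> ring
  rw [← hfull, hfactor]
  exact (rank_mul_le_left _ _).trans (rank_le_card_width _)

theorem dotProduct_pow_mulVec_eq_sum {R ι : Type*} [CommSemiring R] [Fintype ι] [DecidableEq ι]
    (M : Matrix ι ι R) (F : ι → R) (n : ℕ) (I : ι → R) :
    I ⬝ᵥ (M ^ n *ᵥ F) = ∑ f : Fin (n + 1) → ι,
      I (f 0) * (∏ i : Fin n, M (f i.castSucc) (f i.succ)) * F (f (Fin.last n)) := by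
  induction n generalizing I with
  | zero =>
    rw [pow_zero, one_mulVec, ← (Equiv.funUnique (Fin 1) ι).symm.sum_comp]
    simp [dotProduct]
  | succ n ih =>
    rw [pow_succ', ← mulVec_mulVec, dotProduct_mulVec, ih]
    conv_rhs => rw [← (Fin.consEquiv fun _ => ι).sum_comp, Fintype.sum_prod_type, Finset.sum_comm]
    simp only [vecMul, dotProduct, Finset.sum_mul, Fin.consEquiv_apply, Fin.prod_univ_succ,
      Fin.cons_zero, Fin.cons_succ, ← Fin.succ_castSucc, Fin.castSucc_zero, ← Fin.succ_last]
    exact Finset.sum_congr rfl fun f _ => Finset.sum_congr rfl fun q _ => by ring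

theorem recognizes_diagonal {d : ℕ} (x : Fin d → ℚ) :
    Recognizes (diagonal x) (fun _ => 1) (fun _ => 1) (fun n => ∑ j, x j ^ n) := fun n => by
  simp [diagonal_pow, dotProduct, mulVec_diagonal]

theorem AcceptingRun.eq_of_diagonal {d n : ℕ} {x I F : Fin d → ℚ} {r : Fin (n + 1) → Fin d}
    (hr : AcceptingRun (diagonal x) I F n r) (i : Fin (n + 1)) : r i = r 0 := by
  induction i using Fin.induction with
  | zero => rfl
  | succ i ih =>
    rw [← ih]
    by_contra hne
    exact hr.2.2 i (diagonal_apply_ne x (Ne.symm hne))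

theorem ambiguity_diagonal_le {d : ℕ} (x I F : Fin d → ℚ) (n : ℕ) :
    ambiguity (diagonal x) I F n ≤ d := by
  have hinj : Function.Injective fun r : {r // AcceptingRun (diagonal x) I F n r} => r.1 0 :=
    fun r s hrs => Subtype.ext <| funext fun i => by
      rw [r.2.eq_of_diagonal, s.2.eq_of_diagonal]
      exact hrs
  simpa [ambiguity] using Nat.card_le_card_of_injective _ hinj

section Splice

theorem add_mod_eq_of_dvd {a m n : ℕ} (h : a ∣ n) : (m + n) % a = m % a := by
  rw [Nat.add_mod, Nat.mod_eq_zero_of_dvd h, add_zero, Nat.mod_mod]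

variable {α : Type*} {r : ℕ → α} {i j h x : ℕ}

theorem exists_lt_map_eq_within_card [Fintype α] (r : ℕ → α) (c : ℕ) :
    ∃ i j, c ≤ i ∧ i < j ∧ j ≤ c + Fintype.card α ∧ r i = r j := by
  obtain ⟨t₁, t₂, hne, heq⟩ := Fintype.exists_ne_map_eq_of_card_lt
    (fun t : Fin (Fintype.card α + 1) => r (c + t)) (by simp)
  rcases lt_or_gt_of_ne (Fin.val_ne_of_ne hne) with hlt | hlt
  · exact ⟨c + t₁, c + t₂, by omega, by omega, by omega, heq⟩
  · exact ⟨c + t₂, c + t₁, by omega, by omega, by omega, heq.symm⟩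

def insertLoop (r : ℕ → α) (i j h : ℕ) : ℕ → α := fun x =>
  if x < j then r x else if x < j + h then r (i + (x - i) % (j - i)) else r (x - h)

def deleteBlock (r : ℕ → α) (j h : ℕ) : ℕ → α := fun x => if x < j then r x else r (x + h)

theorem insertLoop_of_lt (hx : x < j) : insertLoop r i j h x = r x := if_pos hx

theorem insertLoop_of_mem_Ico (hx : j ≤ x) (hx' : x < j + h) :
    insertLoop r i j h x = r (i + (x - i) % (j - i)) := by
  simp [insertLoop, hx', Nat.not_lt.2 hx]

theorem insertLoop_of_le (hx : j + h ≤ x) : insertLoop r i j h x = r (x - h) := by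
  simp [insertLoop, Nat.not_lt.2 hx, Nat.not_lt.2 (le_trans (Nat.le_add_right j h) hx)]

theorem insertLoop_eq_mod (hij : i < j) (hloop : r i = r j) (hdvd : (j - i) ∣ h)
    (hx : i ≤ x) (hx' : x ≤ j + h) : insertLoop r i j h x = r (i + (x - i) % (j - i)) := by
  rcases lt_or_ge x j with hxj | hxj
  · rw [insertLoop_of_lt hxj, Nat.mod_eq_of_lt (by omega), Nat.add_sub_cancel' hx]
  rcases lt_or_eq_of_le hx' with hxh | rfl
  · exact insertLoop_of_mem_Ico hxj hxh
  · rw [insertLoop_of_le le_rfl, Nat.add_sub_cancel, show j + h - i = (j - i) + h by omega,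
      Nat.add_mod_left, Nat.mod_eq_zero_of_dvd hdvd, Nat.add_zero, hloop]

theorem insertLoop_add_self (i h : ℕ) :
    insertLoop r i (i + h) h x = if x < i + h then r x else r (x - h) := by
  split_ifs with hx
  · exact insertLoop_of_lt hx
  rcases lt_or_ge x (i + h + h) with hx' | hx'
  · rw [insertLoop_of_mem_Ico (by omega) hx', Nat.add_sub_cancel_left,
      show x - i = (x - h - i) + h by omega, Nat.add_mod_right, Nat.mod_eq_of_lt (by omega)]
    congr 1; omega
  · exact insertLoop_of_le hx'

theorem insertLoop_add_self_of_le (hloop : r (i + h) = r i) (hx : x ≤ i + h) :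
    insertLoop r i (i + h) h x = r x := by
  rw [insertLoop_add_self]
  split_ifs with hx'
  · rfl
  · rw [show x = i + h by omega, Nat.add_sub_cancel, hloop]

theorem deleteBlock_insertLoop : deleteBlock (insertLoop r i j h) j h = r := by
  funext x
  unfold deleteBlock
  split_ifs with hx
  · exact insertLoop_of_lt hx
  · rw [insertLoop_of_le (by omega), Nat.add_sub_cancel]

theorem insertLoop_deleteBlock (hper : ∀ x, i ≤ x → x < i + h → r (x + h) = r x) :
    insertLoop (deleteBlock r (i + h) h) i (i + h) h = r := by
  funext x
  simp only [insertLoop_add_self, deleteBlock]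
  split_ifs with h₁ h₂
  · rfl
  · rw [← hper (x - h) (by omega) h₂, Nat.sub_add_cancel (by omega)]
  · rw [Nat.sub_add_cancel (by omega)]

theorem eq_mod_of_insertLoop_eq {p q h' h₁ h₂ : ℕ}
    (hij : i < j) (hjp : j ≤ p) (hpq : p < q) (hdvd : (j - i) ∣ h) (hlong : q + h ≤ j + h')
    (heq : insertLoop (insertLoop r p q h₁) i j h = insertLoop (insertLoop r p q h₂) i j h') :
    ∀ y, i ≤ y → y < q → r y = r (i + (y - i) % (j - i)) := by
  intro y hiy hyq
  rcases lt_or_ge y j with hyj | hyj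
  · rw [Nat.mod_eq_of_lt (by omega), Nat.add_sub_cancel' hiy]
  have hmod : i + (y + h - i) % (j - i) < q := by
    have := Nat.mod_lt (y + h - i) (Nat.sub_pos_of_lt hij)
    omega
  have hy := congrFun heq (y + h)
  rw [insertLoop_of_le (Nat.add_le_add_right hyj h), Nat.add_sub_cancel, insertLoop_of_lt hyq,
    insertLoop_of_mem_Ico (by omega) (by omega), insertLoop_of_lt hmod] at hy
  rw [hy, show y + h - i = (y - i) + h by omega, add_mod_eq_of_dvd hdvd]

end Splice

namespace WeightedAutomaton

variable {d : ℕ} (M : Matrix (Fin d) (Fin d) ℚ) (I F : Fin d → ℚ)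

/-- An accepting run of length `n`, encoded as a function on `ℕ` that is constant from `n` on, so
that loops can be spliced into it and cut out of it without changing the index type. -/
structure IsRun (n : ℕ) (r : ℕ → Fin d) : Prop where
  init : I (r 0) ≠ 0
  final : F (r n) ≠ 0
  step : ∀ x < n, M (r x) (r (x + 1)) ≠ 0
  const : ∀ x, n ≤ x → r x = r n

def Runs (n : ℕ) : Type := {r : ℕ → Fin d // IsRun M I F n r}

def runWeight (n : ℕ) (r : ℕ → Fin d) : ℚ :=
  I (r 0) * (∏ x ∈ Finset.range n, M (r x) (r (x + 1))) * F (r n)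

def loopWeight (r : ℕ → Fin d) (i h : ℕ) : ℚ :=
  ∏ s ∈ Finset.range h, M (r (i + s)) (r (i + s + 1))

def runsEquiv (n : ℕ) : Runs M I F n ≃ {f : Fin (n + 1) → Fin d // AcceptingRun M I F n f} where
  toFun r := ⟨fun i => r.1 i, r.2.init, r.2.final, fun i => r.2.step i i.isLt⟩
  invFun f := ⟨fun x => f.1 ⟨min x n, by omega⟩, by
    obtain ⟨hI, hF, hM⟩ := f.2
    refine ⟨hI, by simpa [Fin.last] using hF, fun x hx => ?_, fun x hx => by simp [hx]⟩
    simpa [Nat.min_eq_left hx.le, Nat.min_eq_left (Nat.succ_le_of_lt hx)] using hM ⟨x, hx⟩⟩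
  left_inv r := Subtype.ext <| funext fun x => by
    rcases le_total x n with hx | hx
    · simp [hx]
    · simp [hx, r.2.const x hx]
  right_inv f := Subtype.ext <| funext fun i => by simp [Nat.min_eq_left (Fin.is_le i)]

noncomputable instance (n : ℕ) : Fintype (Runs M I F n) := by
  classical exact Fintype.ofEquiv _ (runsEquiv M I F n).symm

theorem card_runs (n : ℕ) : Fintype.card (Runs M I F n) = ambiguity M I F n := by
  rw [ambiguity, ← Nat.card_eq_fintype_card, Nat.card_congr (runsEquiv M I F n)]

theorem acceptingRun_of_weight_ne_zero {n : ℕ} {f : Fin (n + 1) → Fin d}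
    (h : I (f 0) * (∏ i : Fin n, M (f i.castSucc) (f i.succ)) * F (f (Fin.last n)) ≠ 0) :
    AcceptingRun M I F n f := by
  rw [mul_ne_zero_iff, mul_ne_zero_iff, Finset.prod_ne_zero_iff] at h
  exact ⟨h.1.1, h.2, fun i => h.1.2 i (Finset.mem_univ i)⟩

theorem eq_sum_runWeight {u : ℕ → ℚ} (hu : Recognizes M I F u) (n : ℕ) :
    u n = ∑ r : Runs M I F n, runWeight M I F n r.1 := by
  classical
  rw [hu n, dotProduct_pow_mulVec_eq_sum,
    ← Finset.sum_filter_of_ne fun f _ => acceptingRun_of_weight_ne_zero M I F,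
    Finset.sum_subtype _ (p := AcceptingRun M I F n) (fun f => by simp),
    ← (runsEquiv M I F n).sum_comp]
  refine Finset.sum_congr rfl fun r _ => ?_
  rw [runWeight, ← Fin.prod_univ_eq_prod_range]
  rfl

variable {M I F}

theorem IsRun.step_mod {n i j : ℕ} {r : ℕ → Fin d} (hr : IsRun M I F n r) (hij : i < j)
    (hjn : j ≤ n) (hloop : r i = r j) (s : ℕ) :
    M (r (i + s % (j - i))) (r (i + (s + 1) % (j - i))) ≠ 0 := by
  have hs : s % (j - i) + 1 ≤ j - i := Nat.mod_lt s (Nat.sub_pos_of_lt hij)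
  rw [← Nat.mod_add_mod]
  rcases hs.lt_or_eq with hlt | heq
  · rw [Nat.mod_eq_of_lt hlt, ← add_assoc]
    exact hr.step _ (by omega)
  · have hstep := hr.step (j - 1) (by omega)
    rw [heq, Nat.mod_self, add_zero, hloop, show i + s % (j - i) = j - 1 by omega]
    rwa [Nat.sub_add_cancel (by omega : 1 ≤ j)] at hstep

theorem isRun_insertLoop {n i j h : ℕ} {r : ℕ → Fin d} (hr : IsRun M I F n r) (hij : i < j)
    (hjn : j ≤ n) (hloop : r i = r j) (hdvd : (j - i) ∣ h) :
    IsRun M I F (n + h) (insertLoop r i j h) where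
  init := by rw [insertLoop_of_lt (by omega)]; exact hr.init
  final := by rw [insertLoop_of_le (by omega), Nat.add_sub_cancel]; exact hr.final
  step x hx := by
    rcases lt_or_ge (x + 1) j with hxj | hxj
    · rw [insertLoop_of_lt hxj, insertLoop_of_lt (by omega)]
      exact hr.step x (by omega)
    rcases le_or_gt (x + 1) (j + h) with hxh | hxh
    · rw [insertLoop_eq_mod hij hloop hdvd (by omega) (by omega),
        insertLoop_eq_mod hij hloop hdvd (by omega) hxh, show x + 1 - i = x - i + 1 by omega]
      exact hr.step_mod hij hjn hloop (x - i)
    · rw [insertLoop_of_le (by omega), insertLoop_of_le (by omega),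
        show x + 1 - h = x - h + 1 by omega]
      exact hr.step (x - h) (by omega)
  const x hx := by
    rw [insertLoop_of_le (by omega), insertLoop_of_le (by omega), Nat.add_sub_cancel]
    exact hr.const (x - h) (by omega)

theorem isRun_deleteBlock {n j h : ℕ} {r : ℕ → Fin d} (hr : IsRun M I F (n + h) r)
    (hj : 0 < j) (hjn : j ≤ n) (hloop : r (j + h) = r j) :
    IsRun M I F n (deleteBlock r j h) where
  init := by simpa [deleteBlock, hj] using hr.init
  final := by simpa [deleteBlock, Nat.not_lt.2 hjn] using hr.final
  step x hx := by
    simp only [deleteBlock]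
    split_ifs with h₁ h₂ h₂
    · exact hr.step x (by omega)
    · obtain rfl : j = x + 1 := by omega
      rw [hloop]
      exact hr.step x (by omega)
    · omega
    · rw [show x + 1 + h = x + h + 1 by omega]
      exact hr.step (x + h) (by omega)
  const x hx := by
    simp only [deleteBlock, Nat.not_lt.2 hjn, Nat.not_lt.2 (hjn.trans hx), if_false]
    rw [hr.const (x + h) (by omega)]

theorem loopWeight_insertLoop {r : ℕ → Fin d} {i h : ℕ} (hloop : r (i + h) = r i) :
    loopWeight M (insertLoop r i (i + h) h) i h = loopWeight M r i h :=
  Finset.prod_congr rfl fun s hs => by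
    have := Finset.mem_range.1 hs
    rw [insertLoop_add_self_of_le hloop (by omega), insertLoop_add_self_of_le hloop (by omega)]

theorem runWeight_insertLoop {n i h : ℕ} {r : ℕ → Fin d} (hin : i ≤ n) (hh : 0 < h)
    (hloop : r (i + h) = r i) :
    runWeight M I F (n + h) (insertLoop r i (i + h) h) =
      runWeight M I F n r * loopWeight M r i h := by
  have hhead : ∏ x ∈ Finset.range (i + h),
      M (insertLoop r i (i + h) h x) (insertLoop r i (i + h) h (x + 1)) =
        ∏ x ∈ Finset.range (i + h), M (r x) (r (x + 1)) :=
    Finset.prod_congr rfl fun x hx => by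
      have := Finset.mem_range.1 hx
      rw [insertLoop_add_self_of_le hloop (by omega), insertLoop_add_self_of_le hloop (by omega)]
  have htail (y : ℕ) : M (insertLoop r i (i + h) h (i + h + y))
      (insertLoop r i (i + h) h (i + h + y + 1)) = M (r (i + y)) (r (i + y + 1)) := by
    rw [insertLoop_add_self, insertLoop_add_self, if_neg (by omega), if_neg (by omega)]
    congr 2 <;> omega
  rw [runWeight, runWeight, loopWeight, insertLoop_of_lt (by omega), insertLoop_add_self,
    if_neg (by omega), Nat.add_sub_cancel, show n + h = i + h + (n - i) by omega,
    Finset.prod_range_add, hhead, Finset.prod_range_add, Finset.prod_congr rfl fun y _ => htail y,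
    show n = i + (n - i) by omega, Finset.prod_range_add, Nat.add_sub_cancel_left]
  ring

variable {k : ℕ}

/-- Pumping the loops `[i, j)` and `[p, q)` in `k + 1` complementary proportions gives `k + 1` runs
of equal length; two of them coincide, which forces the first loop to repeat up to `q`. -/
theorem IsRun.eq_mod_of_card_runs_le (hk : ∀ m, Fintype.card (Runs M I F m) ≤ k)
    {n i j p q : ℕ} {r : ℕ → Fin d} (hr : IsRun M I F n r) (hij : i < j) (hjp : j ≤ p)
    (hpq : p < q) (hqn : q ≤ n) (hloop₁ : r i = r j) (hloop₂ : r p = r q) :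
    ∀ y, i ≤ y → y < q → r y = r (i + (y - i) % (j - i)) := by
  -- a common multiple of both loop lengths; `q ≤ A` makes two different pumpings of the first
  -- loop overlap on all of `[j, q)`
  set A := (j - i) * (q - p) * q
  have hA₁ : (j - i) ∣ A := Dvd.intro _ (mul_assoc _ _ _).symm
  have hA₂ : (q - p) ∣ A := ⟨(j - i) * q, by simp only [A]; ring⟩
  have hqA : q ≤ A := Nat.le_mul_of_pos_left q (Nat.mul_pos (by omega) (by omega))
  let pump (x : ℕ) := insertLoop (insertLoop r p q ((k - x) * A)) i j (x * A)
  have hpump (x : Fin (k + 1)) : IsRun M I F (n + k * A) (pump x) := by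
    have hinner := isRun_insertLoop hr hpq hqn hloop₂ (hA₂.mul_left (k - x))
    have hloop : insertLoop r p q ((k - x) * A) i = insertLoop r p q ((k - x) * A) j := by
      rwa [insertLoop_of_lt (by omega), insertLoop_of_lt (by omega)]
    have hrun := isRun_insertLoop hinner hij (by omega) hloop (hA₁.mul_left x)
    rwa [add_assoc, ← add_mul, Nat.sub_add_cancel (Nat.le_of_lt_succ x.isLt)] at hrun
  obtain ⟨x₁, x₂, hne, heq⟩ := Fintype.exists_ne_map_eq_of_card_lt (β := Runs M I F (n + k * A))
    (fun x : Fin (k + 1) => ⟨pump x, hpump x⟩)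
    (by simpa using (hk _).trans_lt k.lt_succ_self)
  have heq' : pump x₁ = pump x₂ := congrArg Subtype.val heq
  have hlong {x x' : ℕ} (hlt : x < x') : q + x * A ≤ j + x' * A := by
    have := Nat.mul_le_mul_right A (Nat.succ_le_of_lt hlt)
    rw [Nat.succ_mul] at this
    omega
  rcases lt_or_gt_of_ne (Fin.val_ne_of_ne hne) with hlt | hlt
  · exact eq_mod_of_insertLoop_eq hij hjp hpq (hA₁.mul_left _) (hlong hlt) heq'
  · exact eq_mod_of_insertLoop_eq hij hjp hpq (hA₁.mul_left _) (hlong hlt) heq'.symm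

theorem IsRun.add_factorial_eq (hk : ∀ m, Fintype.card (Runs M I F m) ≤ k) {n x : ℕ}
    {r : ℕ → Fin d} (hr : IsRun M I F n r) (hn : 2 * d + 2 * d.factorial ≤ n) (hx : d ≤ x)
    (hx' : x ≤ d + d.factorial) : r (x + d.factorial) = r x := by
  obtain ⟨i, j, -, hij, hjd, hloop₁⟩ := exists_lt_map_eq_within_card r 0
  obtain ⟨p, q, hp, hpq, hq, hloop₂⟩ := exists_lt_map_eq_within_card r (n - d)
  rw [Fintype.card_fin] at hjd hq
  have hper := hr.eq_mod_of_card_runs_le hk hij (by omega) hpq (by omega) hloop₁ hloop₂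
  rw [hper (x + d.factorial) (by omega) (by omega), hper x (by omega) (by omega),
    show x + d.factorial - i = x - i + d.factorial by omega,
    add_mod_eq_of_dvd (Nat.dvd_factorial (by omega) (by omega))]

def runsAddFactorialEquiv (hk : ∀ m, Fintype.card (Runs M I F m) ≤ k) {n : ℕ}
    (hn : 2 * d + 2 * d.factorial ≤ n) :
    Runs M I F n ≃ Runs M I F (n + d.factorial) where
  toFun r := ⟨insertLoop r.1 d (d + d.factorial) d.factorial,
    isRun_insertLoop r.2 (by simp [Nat.factorial_pos]) (by omega)
      (r.2.add_factorial_eq hk hn le_rfl (by omega)).symm (by simp)⟩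
  invFun r := ⟨deleteBlock r.1 (d + d.factorial) d.factorial,
    isRun_deleteBlock r.2 (by simp [Nat.factorial_pos]) (by omega)
      (r.2.add_factorial_eq hk (by omega) (by omega) le_rfl)⟩
  left_inv r := Subtype.ext deleteBlock_insertLoop
  right_inv r := Subtype.ext <| insertLoop_deleteBlock fun x hx hx' =>
    r.2.add_factorial_eq hk (by omega) hx hx'.le

theorem sum_runWeight_add_mul (hk : ∀ m, Fintype.card (Runs M I F m) ≤ k) {n : ℕ}
    (hn : 2 * d + 2 * d.factorial ≤ n) (t : ℕ) :
    ∑ r : Runs M I F (n + t * d.factorial), runWeight M I F (n + t * d.factorial) r.1 =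
      ∑ r : Runs M I F n, runWeight M I F n r.1 * loopWeight M r.1 d d.factorial ^ t := by
  induction t generalizing n with
  | zero => rw [zero_mul, add_zero]; simp
  | succ t ih =>
    rw [show n + (t + 1) * d.factorial = n + d.factorial + t * d.factorial by ring,
      ih (by omega), ← (runsAddFactorialEquiv hk hn).sum_comp]
    refine Finset.sum_congr rfl fun r _ => ?_
    have hloop := r.2.add_factorial_eq hk hn le_rfl (by omega)
    have happly : (runsAddFactorialEquiv hk hn r).1 =
        insertLoop r.1 d (d + d.factorial) d.factorial := rfl
    rw [happly, runWeight_insertLoop (by omega) (Nat.factorial_pos d) hloop,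
      loopWeight_insertLoop hloop, pow_succ]
    ring

end WeightedAutomaton

open WeightedAutomaton

theorem power_sum_ambiguity_hierarchy_general (k : ℕ) :
    (∃ (d : ℕ) (M : Matrix (Fin d) (Fin d) ℚ) (I F : Fin d → ℚ),
      Recognizes M I F (fun n => ∑ i ∈ Finset.range (k + 1), ((i : ℚ) + 1) ^ n) ∧
      ∀ n : ℕ, ambiguity M I F n ≤ k + 1) ∧
    ¬ (∃ (d : ℕ) (M : Matrix (Fin d) (Fin d) ℚ) (I F : Fin d → ℚ),
      Recognizes M I F (fun n => ∑ i ∈ Finset.range (k + 1), ((i : ℚ) + 1) ^ n) ∧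
      ∀ n : ℕ, ambiguity M I F n ≤ k) := by
  have hsum (n : ℕ) : ∑ i ∈ Finset.range (k + 1), ((i : ℚ) + 1) ^ n =
      ∑ j : Fin (k + 1), ((j : ℚ) + 1) ^ n :=
    (Fin.sum_univ_eq_sum_range (fun i => ((i : ℚ) + 1) ^ n) (k + 1)).symm
  refine ⟨⟨k + 1, diagonal fun j => (j : ℚ) + 1, fun _ => 1, fun _ => 1,
    fun n => (hsum n).trans (recognizes_diagonal _ n), ambiguity_diagonal_le _ _ _⟩, ?_⟩
  rintro ⟨d, M, I, F, hu, hamb⟩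
  have hk (m : ℕ) : Fintype.card (Runs M I F m) ≤ k := (card_runs M I F m).trans_le (hamb m)
  set L := d.factorial
  set N := 2 * d + 2 * L
  have hinj : Function.Injective fun j : Fin (k + 1) => ((j : ℚ) + 1) ^ L := fun i j hij =>
    Fin.ext <| by exact_mod_cast add_right_cancel ((pow_left_inj₀ (by positivity) (by positivity)
      (Nat.factorial_ne_zero d)).1 hij)
  have hexp := card_le_of_sum_mul_pow_eq (c := fun j : Fin (k + 1) => ((j : ℚ) + 1) ^ N)
    (fun j => by positivity) hinj
    (fun r : Runs M I F N => runWeight M I F N r.1) (fun r => loopWeight M r.1 d L) fun t => by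
      rw [← sum_runWeight_add_mul hk le_rfl t, ← eq_sum_runWeight M I F hu, hsum]
      exact Finset.sum_congr rfl fun j _ => by rw [← pow_mul', ← pow_add]
  exact absurd (hexp.trans (hk N)) (by omega)

/-- For every `k ≥ 1`, the sequence `u n = 1^n + 2^n + … + (k+1)^n` is
recognized by a `(k+1)`-ambiguous weighted automaton but by no `k`-ambiguous one. -/
theorem power_sum_ambiguity_hierarchy (k : ℕ) (hk : 1 ≤ k) :
    (∃ (d : ℕ) (M : Matrix (Fin d) (Fin d) ℚ) (I F : Fin d → ℚ),
      Recognizes M I F (fun n => ∑ i ∈ Finset.range (k + 1), ((i : ℚ) + 1) ^ n) ∧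
      ∀ n : ℕ, ambiguity M I F n ≤ k + 1) ∧
    ¬ (∃ (d : ℕ) (M : Matrix (Fin d) (Fin d) ℚ) (I F : Fin d → ℚ),
      Recognizes M I F (fun n => ∑ i ∈ Finset.range (k + 1), ((i : ℚ) + 1) ^ n) ∧
      ∀ n : ℕ, ambiguity M I F n ≤ k) :=
  power_sum_ambiguity_hierarchy_general k
end
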